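/- arXiv:2410.19654 — 6 statements merged into one kernel-verified Lean document; each statement's English description precedes it below -/
import Mathlib

section
/- Let 𝒜 be a finite alphabet and let p > 1 be a real number. Suppose there exists a real β > 1 such that |𝒜| − Σ_{ℓ≥1} β^{1−⌈ℓ(p−1)⌉} ≥ β (the series converging). Then for all n ≥ 0, |ℒ_{n+1}(𝒜,p)| ≥ β·|ℒ_n(𝒜,p)|. -/
open Filter

/-- `w` is a `p`-power: `w = u^⌊p⌋ · v` with `v` a prefix of `u` and `|w| ≥ p·|u|`. -/
def IsPPower {A : Type*} (p : ℝ) (w : List A) : Prop :=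
  w ≠ [] ∧ ∃ u v : List A, v <+: u ∧
    w = (List.replicate ⌊p⌋₊ u).flatten ++ v ∧ p * u.length ≤ w.length

/-- `w` is `p`-power-free: no factor of `w` is a `p`-power. -/
def PFree {A : Type*} (p : ℝ) (w : List A) : Prop :=
  ∀ f : List A, f <:+: w → ¬ IsPPower p f

/-- The set of `p`-power-free words of length `n` over `A`. -/
def plangN (A : Type*) (p : ℝ) (n : ℕ) : Set (List A) :=
  {w | w.length = n ∧ PFree p w}

lemma pfree_infix {A : Type*} {p : ℝ} {w f : List A} (hw : PFree p w) (h : f <:+: w) :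
    PFree p f := fun g hg => hw g (hg.trans h)

lemma replicate_flatten_comm {A : Type*} (u : List A) (k : ℕ) :
    u ++ (List.replicate k u).flatten = (List.replicate k u).flatten ++ u := by
  induction k with
  | zero => simp
  | succ k ihk =>
    rw [List.replicate_succ, List.flatten_cons, ihk, ← List.append_assoc, ihk]

/-- a p-power is a prefix of `u ++` itself, i.e. has period `|u|`. -/
lemma ppower_prefix_period {A : Type*} {p : ℝ} {f u v : List A} (hv : v <+: u)
    (hf : f = (List.replicate ⌊p⌋₊ u).flatten ++ v) : f <+: u ++ f := by
  obtain ⟨v', hv'⟩ := hv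
  refine ⟨v' ++ v, ?_⟩
  rw [hf, ← List.append_assoc, List.append_assoc _ v v', hv', ← List.append_assoc,
    ← replicate_flatten_comm, List.append_assoc]

lemma period_shift {A : Type*} {f u : List A} (h : f <+: u ++ f) {i : ℕ}
    (hi : i + u.length < f.length) : f[i + u.length]? = f[i]? := by
  obtain ⟨t, ht⟩ := h
  calc f[i + u.length]? = (f ++ t)[i + u.length]? := (List.getElem?_append_left hi).symm
    _ = (u ++ f)[i + u.length]? := by rw [ht]
    _ = f[i + u.length - u.length]? := List.getElem?_append_right (Nat.le_add_left _ _)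
    _ = f[i]? := by rw [Nat.add_sub_cancel]

lemma ceil_identity {p : ℝ} (hp : 1 < p) (m : ℕ) (hm : 1 ≤ m) :
    ((⌈p * m⌉₊ - m : ℕ) : ℤ) = ⌈(m : ℝ) * (p - 1)⌉ := by
  have h0 : (0:ℝ) ≤ p * m := by positivity
  have hm' : (1:ℝ) ≤ (m:ℝ) := Nat.one_le_cast.mpr hm
  have hle : m ≤ ⌈p * m⌉₊ := le_of_lt (Nat.lt_ceil.mpr (by nlinarith))
  have : ((⌈p * m⌉₊ - m : ℕ) : ℤ) = (⌈p * m⌉₊ : ℤ) - m := by omega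
  rw [this, Int.natCast_ceil_eq_ceil h0, ← Int.ceil_sub_intCast]
  congr 1
  push_cast
  ring

/-- If there is `β > 1` with `|𝒜| − Σ_{ℓ≥1} β^(1−⌈ℓ(p−1)⌉) ≥ β` (the series
converging), then `|ℒ_{n+1}(𝒜,p)| ≥ β·|ℒ_n(𝒜,p)|` for all `n ≥ 0`. -/
theorem stmt8 {A : Type*} [Fintype A] (p : ℝ) (hp : 1 < p) (β : ℝ) (hβ : 1 < β)
    (hsum : Summable fun ℓ : ℕ => β ^ ((1 : ℤ) - ⌈((ℓ : ℝ) + 1) * (p - 1)⌉))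
    (hcond : β ≤ (Fintype.card A : ℝ) - ∑' ℓ : ℕ, β ^ ((1 : ℤ) - ⌈((ℓ : ℝ) + 1) * (p - 1)⌉)) :
    ∀ n : ℕ, β * ((plangN A p n).ncard : ℝ) ≤ ((plangN A p (n + 1)).ncard : ℝ) := by
  classical
  have hβ0 : (0:ℝ) < β := lt_trans one_pos hβ
  have hfin : ∀ k : ℕ, (plangN A p k).Finite := fun k =>
    (List.finite_length_eq A k).subset fun w hw => hw.1
  set C : ℕ → ℕ := fun k => (plangN A p k).ncard with hCdef
  set F : (k : ℕ) → Finset (List A) := fun k => (hfin k).toFinset with hFdef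
  have hcardF : ∀ k, (F k).card = C k := fun k => (Set.ncard_eq_toFinset_card _ (hfin k)).symm
  have hmemF : ∀ k (w : List A), w ∈ F k ↔ w ∈ plangN A p k := fun k w =>
    Set.Finite.mem_toFinset _
  -- the `tm` function
  set tm : ℕ → ℕ := fun m => ⌈p * m⌉₊ - m with htmdef
  have htm_pos : ∀ m, 1 ≤ m → 1 ≤ tm m ∧ m + tm m = ⌈p * m⌉₊ := by
    intro m hm
    have h1 : m < ⌈p * m⌉₊ := by
      rw [Nat.lt_ceil]
      have : (1:ℝ) ≤ (m:ℝ) := Nat.one_le_cast.mpr hm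
      nlinarith
    simp only [htmdef]
    omega
  intro n
  induction n using Nat.strong_induction_on with
  | _ n ih =>
  -- the extension set E'
  set E : Finset (List A) :=
    ((F n) ×ˢ (Finset.univ : Finset A)).image (fun q => q.1 ++ [q.2]) with hEdef
  have hEcard : E.card = C n * Fintype.card A := by
    rw [hEdef, Finset.card_image_of_injective, Finset.card_product, hcardF,
      Finset.card_univ]
    intro q q' hqq
    obtain ⟨hl, hr⟩ := List.append_inj' hqq (by simp)
    exact Prod.ext hl (by simpa using hr)
  -- basic facts about members of E
  have hEmem : ∀ x ∈ E, x.length = n + 1 ∧ ∀ L ≤ n, x.take L ∈ F L := by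
    intro x hx
    rw [hEdef, Finset.mem_image] at hx
    obtain ⟨⟨w, a⟩, hwa, rfl⟩ := hx
    have hw : w ∈ plangN A p n := (hmemF n w).mp (Finset.mem_product.mp hwa).1
    have hwlen : w.length = n := hw.1
    constructor
    · simp [hwlen]
    · intro L hL
      have h1 : (w ++ [a]).take L = w.take L := List.take_append_of_le_length (by omega)
      rw [hmemF, h1]
      exact ⟨by simp [hwlen]; omega, pfree_infix hw.2 (List.take_prefix L w).isInfix⟩
  -- p-power-free words of length n+1 are extensions
  have hsub1 : F (n+1) ⊆ E := by
    intro x hx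
    have hx' := (hmemF _ x).mp hx
    have hne : x ≠ [] := by intro h; rw [h] at hx'; exact absurd hx'.1 (by simp)
    rw [hEdef, Finset.mem_image]
    refine ⟨(x.dropLast, x.getLast hne), Finset.mem_product.mpr ⟨?_, Finset.mem_univ _⟩,
      List.dropLast_append_getLast hne⟩
    rw [hmemF]
    exact ⟨by rw [List.length_dropLast, hx'.1]; rfl,
      pfree_infix hx'.2 (List.dropLast_prefix x).isInfix⟩
  -- the bad sets
  set S : ℕ → Finset (List A) := fun m => E.filter (fun x =>
    m + tm m ≤ n + 1 ∧ ∀ i, n + 1 - tm m ≤ i → i < n + 1 → x[i]? = x[i - m]?) with hSdef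
  -- every extension is p-power-free or lies in some bad set
  have hsub2 : E ⊆ F (n+1) ∪ (Finset.range n).biUnion (fun ℓ => S (ℓ+1)) := by
    intro x hx
    obtain ⟨hxlen, htake⟩ := hEmem x hx
    by_cases hxf : PFree p x
    · exact Finset.mem_union_left _ ((hmemF _ x).mpr ⟨hxlen, hxf⟩)
    rw [PFree] at hxf
    push_neg at hxf
    obtain ⟨f, hinf, hpow⟩ := hxf
    -- f must be a suffix of x
    obtain ⟨s, t, hst⟩ := hinf
    have hw : x.take n ∈ F n := htake n le_rfl
    have hwf : PFree p (x.take n) := ((hmemF _ _).mp hw).2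
    rcases List.eq_nil_or_concat t with rfl | ⟨t', c, rfl⟩
    swap
    · exfalso
      have hx2 : (s ++ f ++ t') ++ [c] = x := by
        rw [← hst]; simp [List.append_assoc]
      have hlen' : (s ++ f ++ t').length = n := by
        have := congrArg List.length hx2
        simp only [List.length_append, List.length_cons, List.length_nil, hxlen] at this
        simp only [List.length_append]
        omega
      have h2 : List.take n x = s ++ f ++ t' := by rw [← hx2, List.take_left' hlen']
      exact hwf f ⟨s, t', h2.symm⟩ hpow
    rw [List.append_nil] at hst
    -- unpack the p-power
    obtain ⟨hne, u, v, huv, hfe, hlen⟩ := hpow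
    set m := u.length with hmdef
    have hm1 : 1 ≤ m := by
      rcases Nat.eq_zero_or_pos m with h | h
      · exfalso
        have hu : u = [] := List.length_eq_zero_iff.mp h
        have hv : v = [] := List.prefix_nil.mp (hu ▸ huv)
        rw [hu, hv] at hfe
        simp at hfe
        exact hne hfe
      · exact h
    have hceil : ⌈p * m⌉₊ ≤ f.length := Nat.ceil_le.mpr (by exact_mod_cast hlen)
    obtain ⟨htm1, htmeq⟩ := htm_pos m hm1
    have hflen : m + tm m ≤ f.length := by omega
    have hfx : s.length + f.length = n + 1 := by
      rw [← hxlen, ← hst]; simp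
    have hmn : m ≤ n := by omega
    -- the periodicity condition
    have hper : ∀ i, n + 1 - tm m ≤ i → i < n + 1 → x[i]? = x[i - m]? := by
      intro i hi1 hi2
      have hprefix : f <+: u ++ f := ppower_prefix_period huv hfe
      have hiL : s.length ≤ i := by omega
      have hiL' : s.length ≤ i - m := by omega
      have e1 : x[i]? = f[i - s.length]? := by
        rw [← hst]; exact List.getElem?_append_right hiL
      have e2 : x[i - m]? = f[i - m - s.length]? := by
        rw [← hst]; exact List.getElem?_append_right hiL'
      rw [e1, e2]
      set j' := i - s.length - m with hj'
      have e5 : j' + u.length < f.length := by omega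
      calc f[i - s.length]? = f[j' + u.length]? := by congr 1; omega
        _ = f[j']? := period_shift hprefix e5
        _ = f[i - m - s.length]? := by congr 1; omega
    refine Finset.mem_union_right _ (Finset.mem_biUnion.mpr ⟨m - 1, Finset.mem_range.mpr
      (by omega), ?_⟩)
    have hm' : m - 1 + 1 = m := by omega
    rw [hm', hSdef, Finset.mem_filter]
    exact ⟨hx, by omega, hper⟩
  -- cardinality bound for the bad sets
  have hScard : ∀ m, 1 ≤ m → m + tm m ≤ n + 1 → (S m).card ≤ C (n + 1 - tm m) := by
    intro m hm hmt
    rw [← hcardF]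
    refine Finset.card_le_card_of_injOn (fun x => x.take (n + 1 - tm m)) ?_ ?_
    · intro x hx
      simp only [hSdef, Finset.mem_coe, Finset.mem_filter] at hx
      obtain ⟨htm1, _⟩ := htm_pos m hm
      exact (hEmem x hx.1).2 (n + 1 - tm m) (by omega)
    · intro x hx y hy hxy
      simp only [Finset.mem_coe, hSdef, Finset.mem_filter] at hx hy
      obtain ⟨hxE, _, hxper⟩ := hx
      obtain ⟨hyE, _, hyper⟩ := hy
      have hxlen := (hEmem x hxE).1
      have hylen := (hEmem y hyE).1
      have hxy' : List.take (n + 1 - tm m) x = List.take (n + 1 - tm m) y := hxy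
      have key : ∀ i : ℕ, x[i]? = y[i]? := by
        intro i
        induction i using Nat.strong_induction_on with
        | _ i ihi =>
        by_cases h1 : i < n + 1 - tm m
        · rw [← List.getElem?_take_of_lt h1 (l := x), hxy', List.getElem?_take_of_lt h1]
        by_cases h2 : i < n + 1
        · rw [hxper i (by omega) h2, hyper i (by omega) h2]
          exact ihi (i - m) (by omega)
        · rw [List.getElem?_eq_none (by omega), List.getElem?_eq_none (by omega)]
      exact List.ext_getElem? key
  -- the counting inequality over ℕ
  have hcount : C n * Fintype.card A ≤ C (n+1) + ∑ ℓ ∈ Finset.range n, (S (ℓ+1)).card := by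
    calc C n * Fintype.card A = E.card := hEcard.symm
      _ ≤ ((F (n+1)) ∪ (Finset.range n).biUnion (fun ℓ => S (ℓ+1))).card :=
          Finset.card_le_card hsub2
      _ ≤ (F (n+1)).card + ((Finset.range n).biUnion (fun ℓ => S (ℓ+1))).card :=
          Finset.card_union_le _ _
      _ ≤ C (n+1) + ∑ ℓ ∈ Finset.range n, (S (ℓ+1)).card := by
          rw [hcardF]
          exact Nat.add_le_add_left (Finset.card_biUnion_le) _
  -- the geometric chain from the induction hypothesis
  have pows : ∀ t : ℕ, 1 ≤ t → t ≤ n → β ^ (t-1) * (C (n+1-t) : ℝ) ≤ (C n : ℝ) := by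
    intro t
    induction t with
    | zero => omega
    | succ t iht =>
      intro _ hle
      rcases Nat.eq_zero_or_pos t with ht | ht
      · subst ht; simp
      have hih := ih (n - t) (by omega)
      have hnt : n - t + 1 = n + 1 - t := by omega
      calc β ^ (t+1-1) * (C (n+1-(t+1)) : ℝ)
          = β ^ (t-1) * (β * (C (n - t) : ℝ)) := by
            rw [show t+1-1 = (t-1)+1 by omega, pow_succ, show n+1-(t+1) = n - t by omega]
            ring
        _ ≤ β ^ (t-1) * (C (n - t + 1) : ℝ) := by
            refine mul_le_mul_of_nonneg_left ?_ (by positivity)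
            exact hih
        _ = β ^ (t-1) * (C (n+1-t) : ℝ) := by rw [hnt]
        _ ≤ (C n : ℝ) := iht ht (by omega)
  have chain : ∀ t : ℕ, 1 ≤ t → t ≤ n → (C (n+1-t) : ℝ) ≤ β ^ ((1:ℤ) - t) * (C n : ℝ) := by
    intro t h1 h2
    have hpow := pows t h1 h2
    have hz : β ^ ((1:ℤ) - t) = (β ^ (t-1))⁻¹ := by
      rw [show (1:ℤ) - t = -((t - 1 : ℕ) : ℤ) by push_cast; omega, zpow_neg, zpow_natCast]
    rw [hz]
    have hb : (0:ℝ) < β ^ (t-1) := by positivity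
    calc (C (n+1-t) : ℝ) = (β ^ (t-1))⁻¹ * (β ^ (t-1) * (C (n+1-t) : ℝ)) := by
          rw [← mul_assoc, inv_mul_cancel₀ (ne_of_gt hb), one_mul]
      _ ≤ (β ^ (t-1))⁻¹ * (C n : ℝ) :=
          mul_le_mul_of_nonneg_left hpow (by positivity)
  -- bound each bad set by the ihs
  set T : ℝ := ∑' ℓ : ℕ, β ^ ((1 : ℤ) - ⌈((ℓ : ℝ) + 1) * (p - 1)⌉) with hTdef
  have hterm : ∀ ℓ ∈ Finset.range n,
      ((S (ℓ+1)).card : ℝ) ≤ β ^ ((1 : ℤ) - ⌈((ℓ : ℝ) + 1) * (p - 1)⌉) * (C n : ℝ) := by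
    intro ℓ hℓ
    rw [Finset.mem_range] at hℓ
    set m := ℓ + 1 with hmdef
    have hm1 : 1 ≤ m := by omega
    have hcast : ((ℓ : ℝ) + 1) = (m : ℝ) := by push_cast [hmdef]; ring
    have hceq : ((tm m : ℕ) : ℤ) = ⌈((ℓ : ℝ) + 1) * (p - 1)⌉ := by
      rw [hcast]; exact ceil_identity hp m hm1
    by_cases hmt : m + tm m ≤ n + 1
    · obtain ⟨htm1, _⟩ := htm_pos m hm1
      calc ((S m).card : ℝ) ≤ (C (n + 1 - tm m) : ℝ) := by
            exact_mod_cast hScard m hm1 hmt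
        _ ≤ β ^ ((1:ℤ) - (tm m : ℕ)) * (C n : ℝ) := chain (tm m) htm1 (by omega)
        _ = β ^ ((1 : ℤ) - ⌈((ℓ : ℝ) + 1) * (p - 1)⌉) * (C n : ℝ) := by rw [hceq]
    · have : S m = ∅ := by
        rw [hSdef]
        refine Finset.filter_false_of_mem ?_
        intro x hx h
        exact hmt h.1
      rw [this]
      simp only [Finset.card_empty, Nat.cast_zero]
      positivity
  -- sum the bounds and compare with the tsum
  have hsumle : ∑ ℓ ∈ Finset.range n, ((S (ℓ+1)).card : ℝ) ≤ T * (C n : ℝ) := by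
    calc ∑ ℓ ∈ Finset.range n, ((S (ℓ+1)).card : ℝ)
        ≤ ∑ ℓ ∈ Finset.range n, β ^ ((1 : ℤ) - ⌈((ℓ : ℝ) + 1) * (p - 1)⌉) * (C n : ℝ) :=
          Finset.sum_le_sum hterm
      _ = (∑ ℓ ∈ Finset.range n, β ^ ((1 : ℤ) - ⌈((ℓ : ℝ) + 1) * (p - 1)⌉)) * (C n : ℝ) :=
          (Finset.sum_mul _ _ _).symm
      _ ≤ T * (C n : ℝ) := by
          refine mul_le_mul_of_nonneg_right ?_ (Nat.cast_nonneg _)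
          exact Summable.sum_le_tsum _ (fun i _ => by positivity) hsum
  have hcount' : (C n : ℝ) * (Fintype.card A : ℝ) ≤
      (C (n+1) : ℝ) + ∑ ℓ ∈ Finset.range n, ((S (ℓ+1)).card : ℝ) := by
    exact_mod_cast hcount
  have hfinal : β * (C n : ℝ) ≤ (C (n+1) : ℝ) := by
    have h1 : β * (C n : ℝ) ≤ ((Fintype.card A : ℝ) - T) * (C n : ℝ) :=
      mul_le_mul_of_nonneg_right hcond (Nat.cast_nonneg _)
    nlinarith [Nat.cast_nonneg (α := ℝ) (C n)]
  exact hfinal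
end

section
/- Let 𝒜 be a finite alphabet and let p > 1 be a real number. Suppose there exists a real β > 1 such that |ℒ_{n+1}(𝒜,p)| ≥ β·|ℒ_n(𝒜,p)| for all n ≥ 0, and such that C := 1 − Σ_{ℓ≥1} (⌈pℓ⌉−1)·β^{−⌈(p−1)ℓ⌉} > 0. Then for all n, m ≥ 0, |ℒ_{n+m}(𝒜,p)| ≥ C·|ℒ_n(𝒜,p)|·|ℒ_m(𝒜,p)|. -/
open Filter

namespace Stmt9Aux

open List

variable {α : Type*}

/-- Periodic extension: first `L` characters of `u^∞`. -/
def PErep (u : List α) (L : ℕ) : List α := ((List.replicate L u).flatten).take L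

lemma flatten_replicate_succ (u : List α) (K : ℕ) :
    (List.replicate (K + 1) u).flatten = u ++ (List.replicate K u).flatten := by
  simp [List.replicate_succ]

lemma length_flatten_replicate (u : List α) (K : ℕ) :
    ((List.replicate K u).flatten).length = K * u.length := by
  simp [Nat.mul_comm]

lemma flatten_replicate_nil (K : ℕ) :
    (List.replicate K ([] : List α)).flatten = [] := by
  induction K with
  | zero => simp
  | succ K ih => simp [List.replicate_succ, ih]

lemma take_flatten_replicate {u : List α} {K K' L : ℕ} (hL : L ≤ K * u.length) (hK : K ≤ K') :
    ((List.replicate K' u).flatten).take L = ((List.replicate K u).flatten).take L := by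
  have h1 : List.replicate K' u = List.replicate K u ++ List.replicate (K' - K) u := by
    rw [← List.replicate_add]; congr 1; omega
  rw [h1, List.flatten_append, List.take_append, length_flatten_replicate]
  have h2 : L - K * u.length = 0 := by omega
  rw [h2, List.take_zero, List.append_nil]

lemma PErep_of_le {u : List α} {L : ℕ} (h : L ≤ u.length) : PErep u L = u.take L := by
  cases L with
  | zero => simp [PErep]
  | succ L' =>
    rw [PErep, flatten_replicate_succ, List.take_append]
    have : L' + 1 - u.length = 0 := by omega
    simp [this]

lemma PErep_length {u : List α} (hu : u ≠ []) (L : ℕ) : (PErep u L).length = L := by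
  have h1 : 1 ≤ u.length := List.length_pos_iff.2 hu
  simp only [PErep, List.length_take, length_flatten_replicate]
  exact min_eq_left (Nat.le_mul_of_pos_right L h1)

lemma PErep_unfold {u : List α} (hu : u ≠ []) {L : ℕ} (h : u.length ≤ L) :
    PErep u L = u ++ PErep u (L - u.length) := by
  have h1 : 1 ≤ u.length := List.length_pos_iff.2 hu
  obtain ⟨L', rfl⟩ : ∃ L', L = L' + 1 := ⟨L - 1, by omega⟩
  rw [PErep, flatten_replicate_succ, List.take_append,
    List.take_of_length_le (by omega)]
  congr 1
  rw [PErep]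
  exact take_flatten_replicate (K := L' + 1 - u.length) (K' := L')
    (Nat.le_mul_of_pos_right _ h1) (by omega)

lemma PErep_take {u : List α} {t L : ℕ} (h : t ≤ L) : (PErep u L).take t = PErep u t := by
  rcases eq_or_ne u [] with rfl | hu
  · simp [PErep, flatten_replicate_nil]
  · have h1 : 1 ≤ u.length := List.length_pos_iff.2 hu
    rw [PErep, PErep, List.take_take, min_eq_left h]
    exact take_flatten_replicate (Nat.le_mul_of_pos_right _ h1) h

lemma PErep_prefix {u : List α} {t L : ℕ} (h : t ≤ L) : PErep u t <+: PErep u L :=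
  PErep_take h ▸ List.take_prefix _ _

lemma PErep_drop {u : List α} (hu : u ≠ []) {L : ℕ} (h : u.length ≤ L) :
    (PErep u L).drop u.length = PErep u (L - u.length) := by
  rw [PErep_unfold hu h, List.drop_left]

lemma PErep_drop_mul {u : List α} (hu : u ≠ []) {k L : ℕ} (h : k * u.length ≤ L) :
    (PErep u L).drop (k * u.length) = PErep u (L - k * u.length) := by
  induction k generalizing L with
  | zero => simp
  | succ k ih =>
    have h1 : 1 ≤ u.length := List.length_pos_iff.2 hu
    have h3 : (k + 1) * u.length = u.length + k * u.length := by ring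
    rw [h3, ← List.drop_drop, PErep_drop hu (by omega), ih (by omega)]
    congr 1; omega

lemma PErep_mul_add {u : List α} (hu : u ≠ []) (k t : ℕ) :
    PErep u (k * u.length + t) = (List.replicate k u).flatten ++ PErep u t := by
  induction k with
  | zero => simp
  | succ k ih =>
    have h3 : (k + 1) * u.length + t = u.length + (k * u.length + t) := by ring
    rw [h3, PErep_unfold hu (by omega), Nat.add_sub_cancel_left, ih,
      flatten_replicate_succ, List.append_assoc]

lemma drop_prefix_drop {w : List α} {ℓ : ℕ} (h : w.drop ℓ <+: w) (j : ℕ) :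
    (w.drop j).drop ℓ <+: w.drop j := by
  obtain ⟨c, hc⟩ := h
  have h1 : (w.drop j).drop ℓ = (w.drop ℓ).drop j := by
    rw [List.drop_drop, List.drop_drop, Nat.add_comm]
  rw [h1]
  refine ⟨c.drop (j - (w.drop ℓ).length), ?_⟩
  conv_rhs => rw [← hc]
  rw [List.drop_append]

lemma eq_PErep_of_drop_prefix {ℓ : ℕ} (hℓ : 1 ≤ ℓ) :
    ∀ (L : ℕ) (w : List α), w.length = L → w.drop ℓ <+: w → w = PErep (w.take ℓ) w.length := by
  intro L
  induction L using Nat.strong_induction_on with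
  | _ L IH =>
    intro w hL hp
    subst hL
    by_cases hcase : w.length ≤ ℓ
    · rw [List.take_of_length_le hcase, PErep_of_le le_rfl, List.take_length]
    · push_neg at hcase
      set u := w.take ℓ with hu
      have hulen : u.length = ℓ := by simp [hu]; omega
      have hune : u ≠ [] := by
        intro h; rw [h] at hulen; simp at hulen; omega
      have hdp : w.drop ℓ = w.take (w.length - ℓ) := by
        have := List.prefix_iff_eq_take.mp hp
        simpa using this
      have hp' : (w.drop ℓ).drop ℓ <+: w.drop ℓ := drop_prefix_drop hp ℓ
      have hlen' : (w.drop ℓ).length = w.length - ℓ := by simp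
      have hIH := IH (w.length - ℓ) (by omega) (w.drop ℓ) hlen' hp'
      have hgoal : w.drop ℓ = PErep u (w.length - ℓ) := by
        by_cases h2 : ℓ ≤ w.length - ℓ
        · have htake : (w.drop ℓ).take ℓ = u := by
            rw [hdp, List.take_take, min_eq_left h2, hu]
          rw [htake, hlen'] at hIH
          exact hIH
        · push_neg at h2
          have h3 : w.drop ℓ = u.take (w.length - ℓ) := by
            rw [hdp, hu, List.take_take, min_eq_left (le_of_lt h2)]
          have h4 : w.length - ℓ ≤ u.length := by omega
          rw [h3, PErep_of_le h4]
      calc w = w.take ℓ ++ w.drop ℓ := (List.take_append_drop ℓ w).symm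
        _ = u ++ PErep u (w.length - ℓ) := by rw [hgoal]
        _ = PErep u w.length := by
            rw [PErep_unfold hune (L := w.length) (by omega), hulen]

section Power

variable {p : ℝ}

lemma isPPower_elim {f : List α} (h : IsPPower p f) :
    ∃ u : List α, u ≠ [] ∧ f = PErep u f.length ∧ p * u.length ≤ (f.length : ℝ) := by
  obtain ⟨hne, u, v, hvu, hf, hlen⟩ := h
  have hu : u ≠ [] := by
    rintro rfl
    have hv : v = [] := List.prefix_nil.mp hvu
    subst hv
    rw [flatten_replicate_nil, List.append_nil] at hf
    exact hne hf
  have hflen : f.length = ⌊p⌋₊ * u.length + v.length := by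
    rw [hf, List.length_append, length_flatten_replicate]
  refine ⟨u, hu, ?_, hlen⟩
  calc f = (List.replicate ⌊p⌋₊ u).flatten ++ v := hf
    _ = (List.replicate ⌊p⌋₊ u).flatten ++ u.take v.length := by
        rw [← List.prefix_iff_eq_take.mp hvu]
    _ = (List.replicate ⌊p⌋₊ u).flatten ++ PErep u v.length := by
        rw [PErep_of_le hvu.length_le]
    _ = PErep u (⌊p⌋₊ * u.length + v.length) := (PErep_mul_add hu _ _).symm
    _ = PErep u f.length := by rw [hflen]

lemma PErep_drop_len_prefix {u : List α} (hu : u ≠ []) (L : ℕ) :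
    (PErep u L).drop u.length <+: PErep u L := by
  by_cases h : u.length ≤ L
  · exact (PErep_drop hu h) ▸ PErep_prefix (by omega)
  · rw [List.drop_eq_nil_of_le (by rw [PErep_length hu]; omega)]
    exact List.nil_prefix

lemma isPPower_of_PErep (hp : 1 < p) {u : List α} (hu : u ≠ [])
    {g : List α} (hg : g = PErep u ⌈p * (u.length : ℝ)⌉₊) : IsPPower p g := by
  have hℓ : 1 ≤ u.length := List.length_pos_iff.2 hu
  have hp0 : (0 : ℝ) < p := lt_trans one_pos hp
  have hℓ0 : (0 : ℝ) < (u.length : ℝ) := by exact_mod_cast hℓ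
  set Pl := ⌈p * (u.length : ℝ)⌉₊ with hPl
  have hPl_ge : (p * u.length : ℝ) ≤ (Pl : ℝ) := Nat.le_ceil _
  have hkl : ⌊p⌋₊ * u.length ≤ Pl := by
    have h1 : ((⌊p⌋₊ * u.length : ℕ) : ℝ) ≤ p * u.length := by
      push_cast
      exact mul_le_mul_of_nonneg_right (Nat.floor_le hp0.le) hℓ0.le
    exact_mod_cast h1.trans hPl_ge
  have hPl_le : Pl ≤ ⌊p⌋₊ * u.length + u.length := by
    have h2 : p < (⌊p⌋₊ : ℝ) + 1 := Nat.lt_floor_add_one p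
    have h1 : (p * u.length : ℝ) ≤ ((⌊p⌋₊ * u.length + u.length : ℕ) : ℝ) := by
      push_cast
      nlinarith
    exact Nat.ceil_le.2 h1
  have hPl_pos : 1 ≤ Pl := Nat.ceil_pos.2 (by positivity)
  have hglen : g.length = Pl := by rw [hg, PErep_length hu]
  refine ⟨?_, u, g.drop (⌊p⌋₊ * u.length), ?_, ?_, ?_⟩
  · intro h
    rw [h] at hglen
    simp at hglen
    omega
  · rw [hg, PErep_drop_mul hu hkl, PErep_of_le (by omega)]
    exact List.take_prefix _ _
  · have hsplit : Pl = ⌊p⌋₊ * u.length + (Pl - ⌊p⌋₊ * u.length) := by omega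
    have hdecomp : PErep u Pl =
        (List.replicate ⌊p⌋₊ u).flatten ++ PErep u (Pl - ⌊p⌋₊ * u.length) := by
      conv_lhs => rw [hsplit]
      exact PErep_mul_add hu _ _
    rw [hg, PErep_drop_mul hu hkl]
    exact hdecomp
  · rw [hglen]
    exact hPl_ge

lemma pfree_infix {w v : List α} (h : PFree p w) (hv : v <:+: w) : PFree p v :=
  fun f hf => h f (hf.trans hv)

end Power

lemma plangN_finite (A : Type*) [Fintype A] (p : ℝ) (n : ℕ) : (plangN A p n).Finite := by
  have h : plangN A p n ⊆ {l : List A | l.length = n} := fun w hw => hw.1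
  refine Set.Finite.subset ?_ h
  have h2 : {l : List A | l.length = n} ⊆ Set.range (fun f : Fin n → A => List.ofFn f) := by
    intro l hl
    simp only [Set.mem_setOf_eq] at hl
    refine ⟨fun i => l.get (Fin.cast hl.symm i), ?_⟩
    apply List.ext_getElem (by simp [hl])
    intro i h1 h2
    simp [List.getElem_ofFn]
  exact (Set.finite_range _).subset h2

lemma ncard_prod {γ δ : Type*} (s : Set γ) (t : Set δ) :
    (s ×ˢ t).ncard = s.ncard * t.ncard := by
  rw [← Nat.card_coe_set_eq, ← Nat.card_coe_set_eq, ← Nat.card_coe_set_eq,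
    Nat.card_congr (Equiv.Set.prod s t), Nat.card_prod]

lemma ncard_biUnion_le {ι γ : Type*} (s : Finset ι) (f : ι → Set γ) (hf : ∀ i, (f i).Finite) :
    (⋃ i ∈ s, f i).ncard ≤ ∑ i ∈ s, (f i).ncard := by
  classical
  induction s using Finset.induction with
  | empty => simp
  | @insert a s' ha ih =>
    have heq : (⋃ i ∈ insert a s', f i) = f a ∪ ⋃ i ∈ s', f i := by
      simp [Set.biUnion_insert]
    rw [heq, Finset.sum_insert ha]
    exact le_trans (Set.ncard_union_le _ _) (Nat.add_le_add_left ih _)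

def badClass (A : Type*) (p : ℝ) (n m ℓ s : ℕ) : Set (List A × List A) :=
  {q | q.1 ∈ plangN A p n ∧ q.2 ∈ plangN A p m ∧ 1 ≤ ℓ ∧ 1 ≤ s ∧ s ≤ m ∧
    ⌈p * (ℓ : ℝ)⌉₊ ≤ n + s ∧ s + 1 ≤ ⌈p * (ℓ : ℝ)⌉₊ ∧
    (((q.1 ++ q.2).take (n + s)).drop (n + s - ⌈p * (ℓ : ℝ)⌉₊) =
      PErep ((((q.1 ++ q.2).take (n + s)).drop (n + s - ⌈p * (ℓ : ℝ)⌉₊)).take ℓ)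
        ⌈p * (ℓ : ℝ)⌉₊) ∧
    PFree p ((q.1 ++ q.2).take (n + s - (⌈p * (ℓ : ℝ)⌉₊ - ℓ)))}

lemma coverage {A : Type*} {p : ℝ} (hp : 1 < p) {n m : ℕ} {x y : List A}
    (hx : x ∈ plangN A p n) (hy : y ∈ plangN A p m) (hbad : ¬ PFree p (x ++ y)) :
    ∃ ℓ s : ℕ, 1 ≤ ℓ ∧ ℓ ≤ n + m ∧ 1 ≤ s ∧ s ≤ m ∧ (x, y) ∈ badClass A p n m ℓ s := by
  classical
  set W := x ++ y with hW
  have hWlen : W.length = n + m := by simp [hW, hx.1, hy.1]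
  have hD0 : ∃ e, e ≤ n + m ∧ ∃ f, IsPPower p f ∧ f <:+ W.take e := by
    simp only [PFree, not_forall, not_not] at hbad
    obtain ⟨f0, hinf0, hpow0⟩ := hbad
    obtain ⟨a0, c0, hac0⟩ := hinf0
    refine ⟨a0.length + f0.length, ?_, f0, hpow0, ?_⟩
    · have := congrArg List.length hac0
      simp at this
      omega
    · have htk : W.take (a0.length + f0.length) = a0 ++ f0 := by
        conv_lhs => rw [← hac0]
        rw [← List.length_append (as := a0) (bs := f0), List.take_left]
      rw [htk]
      exact List.suffix_append a0 f0
  set e := Nat.find hD0 with he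
  obtain ⟨heNM, f, hfpow, hfsuf⟩ := Nat.find_spec hD0
  have hmin : ∀ e' < e, ¬(e' ≤ n + m ∧ ∃ f, IsPPower p f ∧ f <:+ W.take e') :=
    fun e' h => Nat.find_min hD0 h
  obtain ⟨u, hu, hfPE, hflen⟩ := isPPower_elim hfpow
  have hℓ1 : 1 ≤ u.length := List.length_pos_iff.2 hu
  set Pl := ⌈p * (u.length : ℝ)⌉₊ with hPldef
  have hPlf : Pl ≤ f.length := by
    refine Nat.ceil_le.2 ?_
    exact_mod_cast hflen
  have hℓPl : u.length < Pl := by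
    refine Nat.lt_ceil.2 ?_
    have h0 : (0 : ℝ) < (u.length : ℝ) := by exact_mod_cast hℓ1
    nlinarith
  have hWtake_len : (W.take e).length = e := by
    simp [hWlen]
    omega
  set g := f.drop (f.length - Pl) with hg
  have hgsufW : g <:+ W.take e := (List.drop_suffix _ _).trans hfsuf
  have hglen : g.length = Pl := by
    simp [hg]
    omega
  have hfdp : f.drop u.length <+: f := by
    have h := PErep_drop_len_prefix hu f.length
    rw [← hfPE] at h
    exact h
  have hgdp : g.drop u.length <+: g := drop_prefix_drop hfdp _
  have hgPE : g = PErep (g.take u.length) g.length :=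
    eq_PErep_of_drop_prefix hℓ1 g.length g rfl hgdp
  have hPle : Pl ≤ e := by
    have := hgsufW.length_le
    rw [hglen, hWtake_len] at this
    exact this
  have hegtn : n < e := by
    by_contra hle
    push_neg at hle
    have hWx : W.take e = x.take e := by
      rw [hW, List.take_append]
      have h1 : e - x.length = 0 := by rw [hx.1]; omega
      rw [h1, List.take_zero, List.append_nil]
    have hfx : f <:+: x := by
      rw [hWx] at hfsuf
      exact hfsuf.isInfix.trans (List.take_prefix e x).isInfix
    exact hx.2 f hfx hfpow
  have hgtl_len : (g.take u.length).length = u.length := by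
    simp [hglen]
    omega
  have hgtl_ne : g.take u.length ≠ [] := by
    intro h
    rw [h] at hgtl_len
    simp at hgtl_len
    omega
  have hbn : e - Pl < n := by
    by_contra hge
    push_neg at hge
    have hgy : g <:+: y := by
      obtain ⟨a', ha'⟩ := hgsufW
      have ha'len : a'.length = e - Pl := by
        have := congrArg List.length ha'
        rw [List.length_append, hglen, hWtake_len] at this
        omega
      have hgdrop : g = (W.take e).drop (e - Pl) := by
        rw [← ha'len, ← ha', List.drop_left]
      have h2 : (W.take e).drop (e - Pl) = (W.drop (e - Pl)).take (e - (e - Pl)) := by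
        rw [List.drop_take]
      have h3 : W.drop (e - Pl) = y.drop (e - Pl - n) := by
        rw [hW, List.drop_append,
          List.drop_eq_nil_of_le (by rw [hx.1]; omega), hx.1, List.nil_append]
      have : g = (y.drop (e - Pl - n)).take (e - (e - Pl)) := by
        rw [hgdrop, h2, h3]
      rw [this]
      exact (List.take_prefix _ _).isInfix.trans (List.drop_suffix _ _).isInfix
    have hgpow : IsPPower p g := by
      refine isPPower_of_PErep hp hgtl_ne ?_
      rw [hgtl_len, ← hPldef, ← hglen]
      exact hgPE
    exact hy.2 g hgy hgpow
  refine ⟨u.length, e - n, hℓ1, by omega, by omega, by omega, hx, hy, hℓ1, by omega, by omega,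
    by omega, by omega, ?_, ?_⟩
  · -- periodicity condition
    have hns : n + (e - n) = e := by omega
    rw [hns]
    obtain ⟨a', ha'⟩ := hgsufW
    have ha'len : a'.length = e - Pl := by
      have := congrArg List.length ha'
      rw [List.length_append, hglen, hWtake_len] at this
      omega
    have hgdrop : (W.take e).drop (e - Pl) = g := by
      rw [← ha'len, ← ha', List.drop_left]
    rw [hgdrop]
    rw [hglen] at hgPE
    exact hgPE
  · -- p-freeness of the shortened prefix
    have hns : n + (e - n) = e := by omega
    rw [hns]
    intro f' hinf' hpow'
    obtain ⟨a2, c2, h2⟩ := hinf'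
    have hW2len : (W.take (e - (Pl - u.length))).length = e - (Pl - u.length) := by
      simp [hWlen]
      omega
    have he'le : a2.length + f'.length ≤ e - (Pl - u.length) := by
      have := congrArg List.length h2
      simp at this
      omega
    refine hmin (a2.length + f'.length) (by omega) ⟨by omega, f', hpow', ?_⟩
    have htk : W.take (a2.length + f'.length) = a2 ++ f' := by
      have h3 : (W.take (e - (Pl - u.length))).take (a2.length + f'.length) =
          W.take (a2.length + f'.length) := by
        rw [List.take_take, min_eq_left he'le]
      rw [← h3, ← h2, ← List.length_append (as := a2) (bs := f'), List.take_left]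
    rw [htk]
    exact List.suffix_append a2 f'

lemma badClass_reconstruct {A : Type*} {p : ℝ} (hp : 1 < p) {n m ℓ s : ℕ} {x y : List A}
    (hq : (x, y) ∈ badClass A p n m ℓ s) :
    x ++ y = ((x ++ y).take (n + s - (⌈p * (ℓ : ℝ)⌉₊ - ℓ))) ++
      PErep (((x ++ y).take (n + s - (⌈p * (ℓ : ℝ)⌉₊ - ℓ))).drop (n + s - ⌈p * (ℓ : ℝ)⌉₊))
        (⌈p * (ℓ : ℝ)⌉₊ - ℓ) ++ y.drop s := by
  obtain ⟨hx, hy, hℓ1, hs1, hsm, hPlns, hsPl, hper, hfree⟩ := hq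
  set W := x ++ y with hW
  have hWlen : W.length = n + m := by simp [hW, hx.1, hy.1]
  set Pl := ⌈p * (ℓ : ℝ)⌉₊ with hPldef
  have hℓPl : ℓ < Pl := by
    refine Nat.lt_ceil.2 ?_
    have h0 : (0 : ℝ) < (ℓ : ℝ) := by exact_mod_cast hℓ1
    nlinarith
  set d := Pl - ℓ with hddef
  set b := n + s - Pl with hbdef
  set e := n + s with hedef
  have hble : b + ℓ = n + s - d := by omega
  have hele : e ≤ n + m := by omega
  set G := (W.take e).drop b with hGdef
  have hGlen : G.length = Pl := by
    simp [hGdef, hWlen]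
    omega
  have hu'len : (G.take ℓ).length = ℓ := by
    simp [hGlen]
    omega
  have hu'ne : G.take ℓ ≠ [] := by
    intro h
    rw [h] at hu'len
    simp at hu'len
    omega
  have step2 : G.take ℓ = (W.take (n + s - d)).drop b := by
    rw [← hble, hGdef, List.drop_take, List.drop_take, List.take_take]
    congr 1
    omega
  have step4 : G.drop ℓ = PErep (G.take ℓ) d := by
    have h5 := PErep_drop hu'ne (L := Pl) (by rw [hu'len]; omega)
    rw [hu'len] at h5
    calc G.drop ℓ = (PErep (G.take ℓ) Pl).drop ℓ := by conv_lhs => rw [hper]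
      _ = PErep (G.take ℓ) (Pl - ℓ) := h5
  have step5 : W.take e = (W.take (n + s - d)) ++ G.drop ℓ := by
    have h6 : (W.take e).take (b + ℓ) = W.take (b + ℓ) := by
      rw [List.take_take, min_eq_left (by omega)]
    have h7 : G.drop ℓ = (W.take e).drop (b + ℓ) := by
      rw [hGdef, List.drop_drop, Nat.add_comm]
    rw [h7, ← hble, ← h6, List.take_append_drop]
  have step6 : W.drop e = y.drop s := by
    rw [hW, List.drop_append,
      List.drop_eq_nil_of_le (by rw [hx.1]; omega), hx.1, List.nil_append]
    congr 1
    omega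
  calc W = W.take e ++ W.drop e := (List.take_append_drop e W).symm
    _ = (W.take (n + s - d)) ++ G.drop ℓ ++ y.drop s := by rw [step5, step6]
    _ = (W.take (n + s - d)) ++ PErep ((W.take (n + s - d)).drop b) d ++ y.drop s := by
        rw [step4, step2]

lemma badClass_ncard_le {A : Type*} [Fintype A] {p : ℝ} (hp : 1 < p) (n m ℓ s : ℕ) :
    (badClass A p n m ℓ s).ncard ≤
      (plangN A p (n + s - (⌈p * (ℓ : ℝ)⌉₊ - ℓ))).ncard * (plangN A p (m - s)).ncard := by
  classical
  rw [← ncard_prod]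
  refine Set.ncard_le_ncard_of_injOn
    (fun q => ((q.1 ++ q.2).take (n + s - (⌈p * (ℓ : ℝ)⌉₊ - ℓ)), q.2.drop s)) ?_ ?_
    ((plangN_finite A p _).prod (plangN_finite A p _))
  · rintro ⟨x, y⟩ hq
    obtain ⟨hx, hy, hℓ1, hs1, hsm, hPlns, hsPl, hper, hfree⟩ := hq
    constructor
    · refine ⟨?_, hfree⟩
      simp [hx.1, hy.1]
      omega
    · refine ⟨by simp [hy.1], ?_⟩
      exact pfree_infix hy.2 (List.drop_suffix s y).isInfix
  · rintro ⟨x1, y1⟩ hq1 ⟨x2, y2⟩ hq2 heq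
    simp only [Prod.mk.injEq] at heq
    obtain ⟨hz, ht⟩ := heq
    have h1 := badClass_reconstruct hp hq1
    have h2 := badClass_reconstruct hp hq2
    rw [hz, ht] at h1
    have hweq : x1 ++ y1 = x2 ++ y2 := h1.trans h2.symm
    have hx1n : x1.length = n := hq1.1.1
    have hx2n : x2.length = n := hq2.1.1
    obtain ⟨hxe, hye⟩ := List.append_inj hweq (by rw [hx1n, hx2n])
    exact Prod.ext hxe hye

lemma count_master {A : Type*} [Fintype A] {p : ℝ} (hp : 1 < p) (n m : ℕ) :
    (plangN A p n).ncard * (plangN A p m).ncard ≤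
      (plangN A p (n + m)).ncard +
        ∑ i ∈ Finset.range (n + m), ∑ s ∈ Finset.Icc 1 m,
          (badClass A p n m (i + 1) s).ncard := by
  classical
  set S := (plangN A p n) ×ˢ (plangN A p m) with hS
  have hSfin : S.Finite := (plangN_finite A p n).prod (plangN_finite A p m)
  set G := {q ∈ S | PFree p (q.1 ++ q.2)} with hG
  set B := {q ∈ S | ¬ PFree p (q.1 ++ q.2)} with hB
  have hsub : S ⊆ G ∪ B := by
    intro q hq
    by_cases h : PFree p (q.1 ++ q.2)
    · exact Or.inl ⟨hq, h⟩
    · exact Or.inr ⟨hq, h⟩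
  have hGfin : G.Finite := hSfin.subset (fun q hq => hq.1)
  have hBfin : B.Finite := hSfin.subset (fun q hq => hq.1)
  have h1 : S.ncard ≤ G.ncard + B.ncard :=
    le_trans (Set.ncard_le_ncard hsub (hGfin.union hBfin)) (Set.ncard_union_le _ _)
  have hGle : G.ncard ≤ (plangN A p (n + m)).ncard := by
    refine Set.ncard_le_ncard_of_injOn (fun q => q.1 ++ q.2) ?_ ?_ (plangN_finite A p (n + m))
    · rintro ⟨x, y⟩ ⟨⟨hx, hy⟩, hfree⟩
      exact ⟨by simp [hx.1, hy.1], hfree⟩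
    · rintro ⟨x1, y1⟩ ⟨⟨hx1, hy1⟩, _⟩ ⟨x2, y2⟩ ⟨⟨hx2, hy2⟩, _⟩ heq
      obtain ⟨hxe, hye⟩ := List.append_inj heq (by rw [hx1.1, hx2.1])
      exact Prod.ext hxe hye
  have hclass_fin : ∀ ℓ s, (badClass A p n m ℓ s).Finite := by
    intro ℓ s
    exact hSfin.subset (fun q hq => ⟨hq.1, hq.2.1⟩)
  have hcov : B ⊆ ⋃ i ∈ Finset.range (n + m), ⋃ s ∈ Finset.Icc 1 m,
      badClass A p n m (i + 1) s := by
    rintro ⟨x, y⟩ ⟨⟨hx, hy⟩, hbad⟩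
    obtain ⟨ℓ, s, hℓ1, hℓnm, hs1, hsm, hmem⟩ := coverage hp hx hy hbad
    simp only [Set.mem_iUnion]
    refine ⟨ℓ - 1, Finset.mem_range.2 (by omega), s, Finset.mem_Icc.2 ⟨hs1, hsm⟩, ?_⟩
    have hrw : ℓ - 1 + 1 = ℓ := by omega
    rw [hrw]
    exact hmem
  have hBle : B.ncard ≤ ∑ i ∈ Finset.range (n + m), ∑ s ∈ Finset.Icc 1 m,
      (badClass A p n m (i + 1) s).ncard := by
    refine le_trans (Set.ncard_le_ncard hcov ?_) ?_
    · exact Set.Finite.biUnion (Finset.range (n + m)).finite_toSet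
        (fun i _ => Set.Finite.biUnion (Finset.Icc 1 m).finite_toSet
          (fun s _ => hclass_fin _ _))
    · refine le_trans (ncard_biUnion_le _ _ (fun i => ?_)) ?_
      · exact Set.Finite.biUnion (Finset.Icc 1 m).finite_toSet (fun s _ => hclass_fin _ _)
      · exact Finset.sum_le_sum (fun i _ => ncard_biUnion_le _ _ (fun s => hclass_fin _ _))
  have hScard : S.ncard = (plangN A p n).ncard * (plangN A p m).ncard := ncard_prod _ _
  omega

end Stmt9Aux

/-- Suppose `β > 1` satisfies `|ℒ_{n+1}(𝒜,p)| ≥ β·|ℒ_n(𝒜,p)|` for all `n` and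
`C := 1 − Σ_{ℓ≥1} (⌈pℓ⌉−1)·β^(−⌈(p−1)ℓ⌉) > 0`. Then
`|ℒ_{n+m}(𝒜,p)| ≥ C·|ℒ_n(𝒜,p)|·|ℒ_m(𝒜,p)|` for all `n, m ≥ 0`. -/
theorem stmt9 {A : Type*} [Fintype A] (p : ℝ) (hp : 1 < p) (β : ℝ) (hβ : 1 < β)
    (hgrow : ∀ n : ℕ, β * ((plangN A p n).ncard : ℝ) ≤ ((plangN A p (n + 1)).ncard : ℝ))
    (hsum : Summable fun ℓ : ℕ =>
      ((⌈p * ((ℓ : ℝ) + 1)⌉ : ℝ) - 1) * β ^ (-⌈(p - 1) * ((ℓ : ℝ) + 1)⌉))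
    (C : ℝ)
    (hC : C = 1 - ∑' ℓ : ℕ,
      ((⌈p * ((ℓ : ℝ) + 1)⌉ : ℝ) - 1) * β ^ (-⌈(p - 1) * ((ℓ : ℝ) + 1)⌉))
    (hCpos : 0 < C) :
    ∀ n m : ℕ,
      C * ((plangN A p n).ncard : ℝ) * ((plangN A p m).ncard : ℝ) ≤
        ((plangN A p (n + m)).ncard : ℝ) := by
  classical
  have hp0 : (0 : ℝ) < p := lt_trans one_pos hp
  have hβ0 : (0 : ℝ) < β := lt_trans one_pos hβ
  have hCne : C ≠ 0 := ne_of_gt hCpos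
  set L : ℕ → ℝ := fun k => ((plangN A p k).ncard : ℝ) with hLdef
  have hLnn : ∀ k, 0 ≤ L k := fun k => Nat.cast_nonneg _
  have hpow : ∀ j k : ℕ, β ^ k * L j ≤ L (j + k) := by
    intro j k
    induction k with
    | zero => simp
    | succ k ih =>
      have h1 : β ^ (k + 1) * L j = β * (β ^ k * L j) := by ring
      rw [h1, show j + (k + 1) = (j + k) + 1 from rfl]
      exact le_trans (mul_le_mul_of_nonneg_left ih hβ0.le) (hgrow (j + k))
  set F : ℕ → ℝ :=
    fun i => ((⌈p * ((i : ℝ) + 1)⌉ : ℝ) - 1) * β ^ (-⌈(p - 1) * ((i : ℝ) + 1)⌉) with hFdef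
  have hFnonneg : ∀ i, 0 ≤ F i := by
    intro i
    apply mul_nonneg
    · have h1 : (0 : ℤ) < ⌈p * ((i : ℝ) + 1)⌉ := by
        apply Int.ceil_pos.2
        have : (0 : ℝ) < (i : ℝ) + 1 := by positivity
        exact mul_pos hp0 this
      have h2 : (1 : ℝ) ≤ ((⌈p * ((i : ℝ) + 1)⌉ : ℤ) : ℝ) := by exact_mod_cast h1
      linarith
    · positivity
  have hsum_val : ∑' i, F i = 1 - C := by rw [hC]; ring
  have hfin_le : ∀ K : Finset ℕ, ∑ i ∈ K, F i ≤ 1 - C := by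
    intro K
    rw [← hsum_val]
    exact Summable.sum_le_tsum K (fun i _ => hFnonneg i) hsum
  suffices Hmain : ∀ N n m : ℕ, n + m = N → C * L n * L m ≤ L (n + m) by
    intro n m
    exact Hmain (n + m) n m rfl
  intro N
  induction N using Nat.strong_induction_on with
  | _ N IH =>
    intro n m hnm
    have hcount := Stmt9Aux.count_master (A := A) (p := p) hp n m
    have hcountR : L n * L m ≤ L (n + m) +
        ∑ i ∈ Finset.range (n + m), ∑ s ∈ Finset.Icc 1 m,
          ((Stmt9Aux.badClass A p n m (i + 1) s).ncard : ℝ) := by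
      simp only [hLdef]
      exact_mod_cast hcount
    have hSsum : ∀ i ∈ Finset.range (n + m),
        ∑ s ∈ Finset.Icc 1 m, ((Stmt9Aux.badClass A p n m (i + 1) s).ncard : ℝ)
          ≤ C⁻¹ * L (n + m) * F i := by
      intro i _
      set ℓ : ℕ := i + 1 with hℓdef
      set Pl : ℕ := ⌈p * (ℓ : ℝ)⌉₊ with hPldef
      have hℓ1 : (1 : ℕ) ≤ ℓ := by omega
      have hℓR : (0 : ℝ) < (ℓ : ℝ) := by exact_mod_cast Nat.cast_pos.2 hℓ1
      have hℓPl : ℓ < Pl := Nat.lt_ceil.2 (by nlinarith)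
      have hPl1 : 1 ≤ Pl := by omega
      set d : ℕ := Pl - ℓ with hddef
      have hd1 : 1 ≤ d := by omega
      have hβd : (0 : ℝ) < β ^ d := by positivity
      set Bnd : ℝ := C⁻¹ * (β ^ d)⁻¹ * L (n + m) with hBnddef
      have hBnd0 : 0 ≤ Bnd := by
        apply mul_nonneg (mul_nonneg (inv_nonneg.2 hCpos.le) (inv_nonneg.2 hβd.le)) (hLnn _)
      have hterm : ∀ s ∈ Finset.Icc 1 m,
          ((Stmt9Aux.badClass A p n m ℓ s).ncard : ℝ) ≤ if s + 1 ≤ Pl then Bnd else 0 := by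
        intro s hs
        by_cases hcase : s + 1 ≤ Pl
        · rw [if_pos hcase]
          rcases Set.eq_empty_or_nonempty (Stmt9Aux.badClass A p n m ℓ s) with hemp | hne
          · rw [hemp]
            simp only [Set.ncard_empty, Nat.cast_zero]
            exact hBnd0
          · obtain ⟨⟨x, y⟩, hq⟩ := hne
            obtain ⟨hxm, hym, _, hs1, hsm, hPlns, hsPl, _, _⟩ := hq
            set a : ℕ := n + s - d with hadef
            set b' : ℕ := m - s with hb'def
            have habd : a + b' + d = n + m := by omega
            have hablt : a + b' < N := by omega
            have hIH := IH (a + b') hablt a b' rfl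
            have hcard : ((Stmt9Aux.badClass A p n m ℓ s).ncard : ℝ) ≤ L a * L b' := by
              have h0 := Stmt9Aux.badClass_ncard_le (A := A) (p := p) hp n m ℓ s
              have h1 : n + s - (⌈p * (ℓ : ℝ)⌉₊ - ℓ) = a := rfl
              rw [h1] at h0
              simp only [hLdef]
              exact_mod_cast h0
            have h3 : C * β ^ d * ((Stmt9Aux.badClass A p n m ℓ s).ncard : ℝ) ≤ L (n + m) := by
              calc C * β ^ d * ((Stmt9Aux.badClass A p n m ℓ s).ncard : ℝ)
                  ≤ C * β ^ d * (L a * L b') := by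
                    exact mul_le_mul_of_nonneg_left hcard (by positivity)
                _ = β ^ d * (C * L a * L b') := by ring
                _ ≤ β ^ d * L (a + b') := mul_le_mul_of_nonneg_left hIH hβd.le
                _ ≤ L (a + b' + d) := hpow (a + b') d
                _ = L (n + m) := by rw [habd]
            have hCβ : (0 : ℝ) < C * β ^ d := mul_pos hCpos hβd
            calc ((Stmt9Aux.badClass A p n m ℓ s).ncard : ℝ)
                = (C * β ^ d)⁻¹ * (C * β ^ d * ((Stmt9Aux.badClass A p n m ℓ s).ncard : ℝ)) := by
                  field_simp
              _ ≤ (C * β ^ d)⁻¹ * L (n + m) :=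
                  mul_le_mul_of_nonneg_left h3 (inv_nonneg.2 hCβ.le)
              _ = Bnd := by rw [hBnddef, mul_inv]
        · rw [if_neg hcase]
          have hempty : Stmt9Aux.badClass A p n m ℓ s = ∅ := by
            ext q
            simp only [Stmt9Aux.badClass, Set.mem_setOf_eq, Set.mem_empty_iff_false, iff_false]
            rintro ⟨_, _, _, _, _, _, hsPl, _⟩
            omega
          rw [hempty]
          simp
      have hcast1 : ((i : ℝ) + 1) = ((ℓ : ℕ) : ℝ) := by rw [hℓdef]; push_cast; ring
      have hceilnat : ((Pl : ℕ) : ℤ) = ⌈p * ((ℓ : ℕ) : ℝ)⌉ := by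
        rw [hPldef]
        exact Int.natCast_ceil_eq_ceil (mul_nonneg hp0.le (Nat.cast_nonneg _))
      have hceil2 : ⌈(p - 1) * ((ℓ : ℕ) : ℝ)⌉ = ⌈p * ((ℓ : ℕ) : ℝ)⌉ - (ℓ : ℤ) := by
        rw [show (p - 1) * ((ℓ : ℕ) : ℝ) = p * ((ℓ : ℕ) : ℝ) - ((ℓ : ℤ) : ℝ) by push_cast; ring]
        exact Int.ceil_sub_intCast _ _
      have hdz : ((d : ℕ) : ℤ) = ⌈(p - 1) * ((ℓ : ℕ) : ℝ)⌉ := by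
        rw [hceil2, ← hceilnat, hddef]
        push_cast [Nat.cast_sub hℓPl.le]
        ring
      have hFi : F i = ((Pl : ℝ) - 1) * (β ^ d)⁻¹ := by
        rw [hFdef]
        simp only
        rw [hcast1, ← hdz]
        have h8 : ((⌈p * ((ℓ : ℕ) : ℝ)⌉ : ℤ) : ℝ) = (Pl : ℝ) := by exact_mod_cast hceilnat.symm
        rw [h8, zpow_neg, zpow_natCast]
      calc ∑ s ∈ Finset.Icc 1 m, ((Stmt9Aux.badClass A p n m ℓ s).ncard : ℝ)
          ≤ ∑ s ∈ Finset.Icc 1 m, (if s + 1 ≤ Pl then Bnd else 0) := Finset.sum_le_sum hterm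
        _ = ∑ s ∈ (Finset.Icc 1 m).filter (fun s => s + 1 ≤ Pl), Bnd :=
            (Finset.sum_filter _ _).symm
        _ = (((Finset.Icc 1 m).filter (fun s => s + 1 ≤ Pl)).card : ℝ) * Bnd := by
            rw [Finset.sum_const, nsmul_eq_mul]
        _ ≤ ((Pl - 1 : ℕ) : ℝ) * Bnd := by
            refine mul_le_mul_of_nonneg_right ?_ hBnd0
            have hsubset : (Finset.Icc 1 m).filter (fun s => s + 1 ≤ Pl) ⊆
                Finset.Icc 1 (Pl - 1) := by
              intro s hsx
              simp only [Finset.mem_filter, Finset.mem_Icc] at hsx ⊢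
              omega
            have hcardle : ((Finset.Icc 1 m).filter (fun s => s + 1 ≤ Pl)).card ≤ Pl - 1 := by
              calc ((Finset.Icc 1 m).filter (fun s => s + 1 ≤ Pl)).card
                  ≤ (Finset.Icc 1 (Pl - 1)).card := Finset.card_le_card hsubset
                _ = Pl - 1 := by rw [Nat.card_Icc]; omega
            exact_mod_cast hcardle
        _ = C⁻¹ * L (n + m) * F i := by
            rw [hFi, hBnddef, Nat.cast_sub hPl1]
            push_cast
            ring
    have hsum_le : ∑ i ∈ Finset.range (n + m), ∑ s ∈ Finset.Icc 1 m,
        ((Stmt9Aux.badClass A p n m (i + 1) s).ncard : ℝ) ≤ C⁻¹ * L (n + m) * (1 - C) := by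
      calc ∑ i ∈ Finset.range (n + m), ∑ s ∈ Finset.Icc 1 m,
            ((Stmt9Aux.badClass A p n m (i + 1) s).ncard : ℝ)
          ≤ ∑ i ∈ Finset.range (n + m), C⁻¹ * L (n + m) * F i := Finset.sum_le_sum hSsum
        _ = C⁻¹ * L (n + m) * ∑ i ∈ Finset.range (n + m), F i := by rw [← Finset.mul_sum]
        _ ≤ C⁻¹ * L (n + m) * (1 - C) := by
            refine mul_le_mul_of_nonneg_left (hfin_le _) ?_
            exact mul_nonneg (inv_nonneg.2 hCpos.le) (hLnn _)
    have hfinal : L n * L m ≤ C⁻¹ * L (n + m) := by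
      calc L n * L m ≤ L (n + m) + C⁻¹ * L (n + m) * (1 - C) :=
            le_trans hcountR (add_le_add le_rfl hsum_le)
        _ = C⁻¹ * L (n + m) := by field_simp; ring
    calc C * L n * L m = C * (L n * L m) := by ring
      _ ≤ C * (C⁻¹ * L (n + m)) := mul_le_mul_of_nonneg_left hfinal hCpos.le
      _ = L (n + m) := by field_simp
end

section
/- Let 𝒜 be a finite alphabet with |𝒜| ≥ 4 and let β = (|𝒜| + √(|𝒜|² − 4|𝒜|))/2. Then for all n ≥ 0, |ℒ_{n+1}(𝒜,2)| ≥ β·|ℒ_n(𝒜,2)|. -/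
open Filter

/-- `w` is square-free: no nonempty `u` with `uu` a factor of `w`. -/
def SqFree {A : Type*} (w : List A) : Prop :=
  ∀ u : List A, u ≠ [] → ¬ (u ++ u) <:+: w

/-- The set of square-free words of length `n` over `A`. -/
def sqLangN (A : Type*) (n : ℕ) : Set (List A) :=
  {w | w.length = n ∧ SqFree w}

lemma SqFree.of_infix {A : Type*} {w w' : List A} (h : SqFree w) (hw : w' <:+: w) :
    SqFree w' := fun u hu hinf => h u hu (hinf.trans hw)

lemma sqLangN_finite (A : Type*) [Fintype A] (n : ℕ) : (sqLangN A n).Finite :=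
  (List.finite_length_eq A n).subset fun _ h => h.1

/-- An infix of `w ++ [a]` which is not an infix of `w` is a suffix. -/
lemma suffix_of_infix_concat {A : Type*} {v w : List A} {a : A}
    (h : v <:+: w ++ [a]) (h' : ¬ v <:+: w) : v <:+ (w ++ [a]) := by
  obtain ⟨s, t, hst⟩ := h
  rcases t.eq_nil_or_concat with rfl | ⟨t', a', rfl⟩
  · exact ⟨s, by simpa using hst⟩
  · exfalso
    apply h'
    have h1 : (s ++ v ++ t') ++ [a'] = w ++ [a] := by
      rw [← hst]; simp [List.concat_eq_append]
    exact ⟨s, t', (List.append_inj' h1 rfl).1⟩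

/-- The finset of square-free words of length `n`. -/
noncomputable def sqF (A : Type*) [Fintype A] (n : ℕ) : Finset (List A) :=
  (sqLangN_finite A n).toFinset

lemma mem_sqF {A : Type*} [Fintype A] {n : ℕ} {w : List A} :
    w ∈ sqF A n ↔ w.length = n ∧ SqFree w := by
  rw [sqF, Set.Finite.mem_toFinset]; exact Iff.rfl

lemma ncard_eq_sqF (A : Type*) [Fintype A] (n : ℕ) :
    (sqLangN A n).ncard = (sqF A n).card :=
  Set.ncard_eq_toFinset_card _ (sqLangN_finite A n)

/-- Key counting inequality:
`k * s n ≤ s (n+1) + ∑_{p=1}^{n} s (n+1-p)`. -/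
lemma sqF_key (A : Type*) [Fintype A] (n : ℕ) :
    Fintype.card A * (sqF A n).card ≤
      (sqF A (n+1)).card + ∑ p ∈ Finset.Icc 1 n, (sqF A (n+1-p)).card := by
  classical
  set E : Finset (List A × A) := sqF A n ×ˢ Finset.univ with hE
  have hEcard : E.card = (sqF A n).card * Fintype.card A := by
    simp [hE]
  set G := E.filter (fun x => SqFree (x.1 ++ [x.2])) with hG
  set B := E.filter (fun x => ¬ SqFree (x.1 ++ [x.2])) with hB
  have hGB : G.card + B.card = E.card :=
    Finset.card_filter_add_card_filter_not _
  have hGle : G.card ≤ (sqF A (n+1)).card := by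
    apply Finset.card_le_card_of_injOn (fun x => x.1 ++ [x.2])
    · intro x hx
      rw [Finset.mem_coe, Finset.mem_filter] at hx
      obtain ⟨hxE, hsq⟩ := hx
      rw [hE, Finset.mem_product] at hxE
      obtain ⟨hlen, -⟩ := mem_sqF.mp hxE.1
      rw [Finset.mem_coe, mem_sqF]
      exact ⟨by simp [hlen], hsq⟩
    · intro x _ y _ hxy
      obtain ⟨h1, h2⟩ := List.append_inj' hxy rfl
      simp only [List.cons.injEq, and_true] at h2
      exact Prod.ext h1 h2
  have hBle : B.card ≤ ∑ p ∈ Finset.Icc 1 n, (sqF A (n+1-p)).card := by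
    have hsub : B ⊆ (Finset.Icc 1 n).biUnion (fun p =>
        B.filter (fun x => ∃ u : List A, u.length = p ∧ (u ++ u) <:+ (x.1 ++ [x.2]))) := by
      intro x hx
      have hx' := hx
      rw [hB, Finset.mem_filter] at hx'
      obtain ⟨hxE, hnsq⟩ := hx'
      rw [hE, Finset.mem_product] at hxE
      obtain ⟨hlen, hsf⟩ := mem_sqF.mp hxE.1
      rw [SqFree] at hnsq
      push_neg at hnsq
      obtain ⟨u, hu, huinf⟩ := hnsq
      have hsuf : (u ++ u) <:+ (x.1 ++ [x.2]) :=
        suffix_of_infix_concat huinf (fun h => hsf u hu h)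
      have hlen2 : u.length + u.length ≤ n + 1 := by
        have h := hsuf.length_le
        simp [hlen] at h
        omega
      have hu1 : 1 ≤ u.length := List.length_pos_iff.mpr hu
      rw [Finset.mem_biUnion]
      exact ⟨u.length, Finset.mem_Icc.mpr ⟨hu1, by omega⟩,
        Finset.mem_filter.mpr ⟨hx, u, rfl, hsuf⟩⟩
    refine le_trans (Finset.card_le_card hsub)
      (le_trans Finset.card_biUnion_le (Finset.sum_le_sum ?_))
    intro p hp
    rw [Finset.mem_Icc] at hp
    apply Finset.card_le_card_of_injOn (fun x => (x.1 ++ [x.2]).take (n+1-p))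
    · intro x hx
      rw [Finset.mem_coe, Finset.mem_filter] at hx
      obtain ⟨hxB, u, hulen, husuf⟩ := hx
      rw [hB, Finset.mem_filter] at hxB
      obtain ⟨hxE, -⟩ := hxB
      rw [hE, Finset.mem_product] at hxE
      obtain ⟨hlen, hsf⟩ := mem_sqF.mp hxE.1
      rw [Finset.mem_coe, mem_sqF]
      constructor
      · rw [List.length_take, List.length_append, hlen]
        simp
      · have ht : (x.1 ++ [x.2]).take (n+1-p) = x.1.take (n+1-p) :=
          List.take_append_of_le_length (by omega)
        beta_reduce
        rw [ht]
        exact hsf.of_infix (List.take_prefix _ _).isInfix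
    · intro x hx y hy hxy
      have recon : ∀ z : List A × A, z ∈ B.filter (fun x =>
          ∃ u : List A, u.length = p ∧ (u ++ u) <:+ (x.1 ++ [x.2])) →
          z.1 ++ [z.2] = (z.1 ++ [z.2]).take (n+1-p) ++
            ((z.1 ++ [z.2]).take (n+1-p)).drop (n+1-2*p) := by
        intro z hz
        rw [Finset.mem_filter] at hz
        obtain ⟨hzB, u, hulen, v, hvu⟩ := hz
        have hwlen : (z.1 ++ [z.2]).length = n + 1 := by
          rw [hB, Finset.mem_filter, hE, Finset.mem_product] at hzB
          have := (mem_sqF.mp hzB.1.1).1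
          simp [this]
        have hl := congrArg List.length hvu
        simp [hulen, hwlen] at hl
        have hvlen : v.length = n + 1 - 2*p := by omega
        have h2p : 2*p ≤ n + 1 := by omega
        have hassoc : (v ++ u) ++ u = z.1 ++ [z.2] := by
          rw [List.append_assoc]; exact hvu
        have htake : (z.1 ++ [z.2]).take (n+1-p) = v ++ u := by
          rw [← hassoc]
          exact List.take_left' (by rw [List.length_append, hvlen, hulen]; omega)
        rw [htake, ← hassoc]
        congr 1
        exact (List.drop_left' hvlen).symm
      have hx' := recon x (Finset.mem_coe.mp hx)
      have hy' := recon y (Finset.mem_coe.mp hy)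
      simp only at hxy
      have hw : x.1 ++ [x.2] = y.1 ++ [y.2] := by rw [hx', hy', hxy]
      obtain ⟨h1, h2⟩ := List.append_inj' hw rfl
      simp only [List.cons.injEq, and_true] at h2
      exact Prod.ext h1 h2
  calc Fintype.card A * (sqF A n).card = E.card := by rw [hEcard]; ring
    _ = G.card + B.card := hGB.symm
    _ ≤ _ := add_le_add hGle hBle

noncomputable def sqCount (A : Type*) [Fintype A] (m : ℕ) : ℝ := ((sqF A m).card : ℝ)

lemma sqCount_nonneg (A : Type*) [Fintype A] (m : ℕ) : 0 ≤ sqCount A m :=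
  Nat.cast_nonneg _

lemma sqCount_cast (A : Type*) [Fintype A] (m : ℕ) :
    ((sqLangN A m).ncard : ℝ) = sqCount A m := by
  rw [ncard_eq_sqF]; rfl

lemma sqCount_key (A : Type*) [Fintype A] (n : ℕ) :
    (Fintype.card A : ℝ) * sqCount A n ≤
      sqCount A (n+1) + ∑ p ∈ Finset.Icc 1 n, sqCount A (n+1-p) := by
  have h := sqF_key A n
  simp only [sqCount]
  exact_mod_cast h

/-- For an alphabet with `|𝒜| ≥ 4` and `β = (|𝒜| + √(|𝒜|² − 4|𝒜|))/2`, one has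
`|ℒ_{n+1}(𝒜,2)| ≥ β·|ℒ_n(𝒜,2)|` for all `n ≥ 0`. -/
theorem stmt10 {A : Type*} [Fintype A] (hA : 4 ≤ Fintype.card A) (β : ℝ)
    (hβ : β = ((Fintype.card A : ℝ) +
      Real.sqrt ((Fintype.card A : ℝ) ^ 2 - 4 * (Fintype.card A : ℝ))) / 2) :
    ∀ n : ℕ, β * ((sqLangN A n).ncard : ℝ) ≤ ((sqLangN A (n + 1)).ncard : ℝ) := by
  set k : ℝ := (Fintype.card A : ℝ) with hk
  have hk4 : (4:ℝ) ≤ k := by rw [hk]; exact_mod_cast hA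
  have hnn : (0:ℝ) ≤ k^2 - 4*k := by nlinarith
  have hsq : Real.sqrt (k^2 - 4*k) ^ 2 = k^2 - 4*k := Real.sq_sqrt hnn
  have h2βk : 2*β - k = Real.sqrt (k^2 - 4*k) := by rw [hβ]; ring
  have h3 : (2*β - k)^2 = k^2 - 4*k := by rw [h2βk]; exact hsq
  have hβ2 : β^2 = k*β - k := by linear_combination h3/4
  have hβge : 2 ≤ β := by
    have h0 := Real.sqrt_nonneg (k^2 - 4*k)
    rw [hβ]; linarith
  have hβ1 : (1:ℝ) < β := by linarith
  have hβ0 : (0:ℝ) < β := by linarith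
  intro n
  induction n using Nat.strong_induction_on with
  | _ n IH =>
  have hsnn : ∀ m, 0 ≤ sqCount A m := sqCount_nonneg A
  rw [sqCount_cast, sqCount_cast]
  have hIH : ∀ m, m < n → β * sqCount A m ≤ sqCount A (m+1) := by
    intro m hm
    have := IH m hm
    rwa [sqCount_cast, sqCount_cast] at this
  have hkey : k * sqCount A n ≤
      sqCount A (n+1) + ∑ p ∈ Finset.Icc 1 n, sqCount A (n+1-p) := by
    rw [hk]; exact sqCount_key A n
  -- chain bound from the induction hypothesis
  have hchain : ∀ i, i ≤ n → β^i * sqCount A (n-i) ≤ sqCount A n := by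
    intro i
    induction i with
    | zero => intro _; simp
    | succ i ih =>
      intro hin
      have h1 : β * sqCount A (n-i-1) ≤ sqCount A (n-i-1+1) := hIH (n-i-1) (by omega)
      have h2 : n-i-1+1 = n-i := by omega
      rw [h2] at h1
      have h3 : β^(i+1) * sqCount A (n-(i+1)) = β^i * (β * sqCount A (n-i-1)) := by
        rw [pow_succ]
        have : n - (i+1) = n-i-1 := by omega
        rw [this]; ring
      rw [h3]
      calc β^i * (β * sqCount A (n-i-1)) ≤ β^i * sqCount A (n-i) :=
            mul_le_mul_of_nonneg_left h1 (pow_nonneg (le_of_lt hβ0) i)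
        _ ≤ sqCount A n := ih (by omega)
  -- geometric bound on the error sum
  set r : ℝ := 1/β with hr
  have hr0 : 0 < r := by positivity
  have hr1 : r < 1 := by rw [hr]; rw [div_lt_one hβ0]; linarith
  have hterm : ∀ p ∈ Finset.Icc 1 n, sqCount A (n+1-p) ≤ sqCount A n * r^(p-1) := by
    intro p hp
    rw [Finset.mem_Icc] at hp
    have hc := hchain (p-1) (by omega)
    have he : n - (p-1) = n+1-p := by omega
    rw [he] at hc
    have hpow : (0:ℝ) < β^(p-1) := pow_pos hβ0 _
    rw [hr, div_pow, one_pow, mul_one_div, le_div_iff₀ hpow]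
    nlinarith [hc]
  have hsum : ∑ p ∈ Finset.Icc 1 n, sqCount A (n+1-p) ≤ sqCount A n * (1/(1-r)) := by
    calc ∑ p ∈ Finset.Icc 1 n, sqCount A (n+1-p)
        ≤ ∑ p ∈ Finset.Icc 1 n, sqCount A n * r^(p-1) := Finset.sum_le_sum hterm
      _ = sqCount A n * ∑ p ∈ Finset.Icc 1 n, r^(p-1) := by rw [Finset.mul_sum]
      _ ≤ sqCount A n * (1/(1-r)) := by
          apply mul_le_mul_of_nonneg_left _ (hsnn n)
          have hre : ∑ p ∈ Finset.Icc 1 n, r^(p-1) = ∑ i ∈ Finset.range n, r^i := by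
            rw [← Finset.Ico_add_one_right_eq_Icc, Finset.sum_Ico_eq_sum_range]
            simp
          rw [hre]
          have hne : r ≠ 1 := ne_of_lt hr1
          rw [geom_sum_eq hne]
          have h1r : (0:ℝ) < 1 - r := by linarith
          have heq : (r^n - 1)/(r-1) = (1 - r^n)/(1-r) := by
            rw [← neg_div_neg_eq]; ring_nf
          rw [heq, div_le_div_iff₀ h1r h1r]
          have : (0:ℝ) ≤ r^n := le_of_lt (pow_pos hr0 n)
          nlinarith
  -- final algebra
  have h1r : (0:ℝ) < 1 - r := by linarith
  have hfrac : 1/(1-r) = β/(β-1) := by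
    rw [hr]; field_simp
  rw [hfrac] at hsum
  have hb1 : (0:ℝ) < β - 1 := by linarith
  have hT : (∑ p ∈ Finset.Icc 1 n, sqCount A (n+1-p)) * (β-1) ≤ sqCount A n * β := by
    calc (∑ p ∈ Finset.Icc 1 n, sqCount A (n+1-p)) * (β-1)
        ≤ (sqCount A n * (β/(β-1))) * (β-1) := by
          apply mul_le_mul_of_nonneg_right hsum (le_of_lt hb1)
      _ = sqCount A n * β := by field_simp
  have h5 : (k-β)*(β-1) = β := by linear_combination -hβ2
  have h6 : ∑ p ∈ Finset.Icc 1 n, sqCount A (n+1-p) ≤ (k-β) * sqCount A n := by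
    have h7 : (∑ p ∈ Finset.Icc 1 n, sqCount A (n+1-p)) * (β-1) ≤
        ((k-β) * sqCount A n) * (β-1) := by
      calc (∑ p ∈ Finset.Icc 1 n, sqCount A (n+1-p)) * (β-1) ≤ sqCount A n * β := hT
        _ = ((k-β) * sqCount A n) * (β-1) := by linear_combination (-(sqCount A n)) * h5
    exact le_of_mul_le_mul_right h7 hb1
  nlinarith [hkey, h6, hsnn n]
end

section
/- Let 𝒜 be a finite alphabet with |𝒜| ≥ 5, let β = (|𝒜| + √(|𝒜|² − 4|𝒜|))/2 and C = 1 − (1+β)/(β−1)². Then C > 0 and for all n, m ≥ 0, |ℒ_{n+m}(𝒜,2)| ≥ C·|ℒ_n(𝒜,2)|·|ℒ_m(𝒜,2)|. -/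
open Filter

namespace SqAux

variable {A : Type*}

lemma takeApp {x y : List A} {j : ℕ} (h : j ≤ x.length) : (x++y).take j = x.take j := by
  rw [List.take_append]; simp [Nat.sub_eq_zero_of_le h]

lemma takeApp2 {x y : List A} {j : ℕ} (h : x.length ≤ j) : (x++y).take j = x ++ y.take (j - x.length) := by
  rw [List.take_append]; simp [List.take_of_length_le h]

lemma dropApp {x y : List A} {j : ℕ} (h : x.length ≤ j) : (x++y).drop j = y.drop (j - x.length) := by
  rw [List.drop_append]; simp [List.drop_of_length_le h]

lemma dropApp2 {x y : List A} {j : ℕ} (h : j ≤ x.length) : (x++y).drop j = x.drop j ++ y := by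
  rw [List.drop_append]; simp [Nat.sub_eq_zero_of_le h]

lemma sqfree_infix {w v : List A} (h : SqFree w) (hv : v <:+: w) : SqFree v :=
  fun u hu hi => h u hu (hi.trans hv)

lemma sqfree_take {w : List A} (h : SqFree w) (j : ℕ) : SqFree (w.take j) :=
  sqfree_infix h (w.take_prefix j).isInfix

lemma sqfree_drop {w : List A} (h : SqFree w) (j : ℕ) : SqFree (w.drop j) :=
  sqfree_infix h (w.drop_suffix j).isInfix

lemma not_sqFree_iff {z : List A} :
    ¬ SqFree z ↔ ∃ s u t : List A, u ≠ [] ∧ z = s ++ u ++ u ++ t := by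
  constructor
  · intro h
    unfold SqFree at h; push_neg at h
    obtain ⟨u, hu, s, t, hst⟩ := h
    exact ⟨s, u, t, hu, by rw [← hst]; simp [List.append_assoc]⟩
  · rintro ⟨s, u, t, hu, rfl⟩ h
    exact h u hu ⟨s, t, by simp [List.append_assoc]⟩

variable [Fintype A]

lemma sqLangN_finite (n : ℕ) : (sqLangN A n).Finite :=
  (List.finite_length_eq A n).subset (fun _ hw => hw.1)

noncomputable def LF (A : Type*) [Fintype A] (n : ℕ) : Finset (List A) :=
  (sqLangN_finite (A := A) n).toFinset

lemma mem_LF {w : List A} {n : ℕ} : w ∈ LF A n ↔ w.length = n ∧ SqFree w := by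
  simp [LF, Set.Finite.mem_toFinset, sqLangN]

lemma ncard_LF (n : ℕ) : (sqLangN A n).ncard = (LF A n).card :=
  Set.ncard_eq_toFinset_card _ _

lemma square_suffix_of_snoc {w : List A} {a : A} (hw : SqFree w) (h : ¬ SqFree (w ++ [a])) :
    ∃ s u : List A, u ≠ [] ∧ w ++ [a] = s ++ u ++ u := by
  obtain ⟨s, u, t, hu, hz⟩ := not_sqFree_iff.1 h
  rcases List.eq_nil_or_concat t with rfl | ⟨t', b, rfl⟩
  · exact ⟨s, u, hu, by simpa using hz⟩
  · exfalso
    rw [List.concat_eq_append, ← List.append_assoc] at hz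
    have hz' : w = s ++ u ++ u ++ t' := (List.append_inj' hz rfl).1
    exact not_sqFree_iff.2 ⟨s, u, t', hu, hz'⟩ hw

lemma count_ext (n : ℕ) :
    Fintype.card A * (LF A n).card ≤
      (LF A (n+1)).card + ∑ ℓ ∈ Finset.Icc 1 n, (LF A (n+1-ℓ)).card := by
  classical
  set E := (LF A n) ×ˢ (Finset.univ : Finset A) with hEdef
  have hE : E.card = Fintype.card A * (LF A n).card := by
    simp [hEdef, Finset.card_product, mul_comm]
  set G := E.filter (fun p => SqFree (p.1 ++ [p.2])) with hGdef
  set B := E.filter (fun p => ¬ SqFree (p.1 ++ [p.2])) with hBdef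
  have hGB : G.card + B.card = E.card := Finset.card_filter_add_card_filter_not _
  have hG : G.card ≤ (LF A (n+1)).card := by
    apply Finset.card_le_card_of_injOn (fun p => p.1 ++ [p.2])
    · intro p hp
      rw [hGdef, Finset.mem_coe, Finset.mem_filter, hEdef, Finset.mem_product] at hp
      obtain ⟨⟨hp1, _⟩, hsf⟩ := hp
      rw [mem_LF] at hp1; rw [Finset.mem_coe, mem_LF]
      exact ⟨by simp [hp1.1], hsf⟩
    · intro p hp q hq hpq
      simp only at hpq
      rw [Finset.mem_coe] at hp hq
      obtain ⟨h1, h2⟩ := List.append_inj' hpq rfl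
      exact Prod.ext h1 (by simpa using h2)
  have hB : B.card ≤ ∑ ℓ ∈ Finset.Icc 1 n, (LF A (n+1-ℓ)).card := by
    have hsub : B ⊆ (Finset.Icc 1 n).biUnion (fun ℓ =>
        B.filter (fun p => ∃ s u : List A, u.length = ℓ ∧ u ≠ [] ∧ p.1 ++ [p.2] = s ++ u ++ u)) := by
      intro p hp
      have hp' := hp
      rw [hBdef, Finset.mem_filter, hEdef, Finset.mem_product, mem_LF] at hp'
      obtain ⟨⟨⟨hlen, hsf⟩, _⟩, hnsf⟩ := hp'
      obtain ⟨s, u, hu, hz⟩ := square_suffix_of_snoc hsf hnsf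
      have hlenz : n + 1 = s.length + u.length + u.length := by
        have := congrArg List.length hz
        simp [hlen] at this; omega
      have hu1 : 1 ≤ u.length := List.length_pos_iff.2 hu
      refine Finset.mem_biUnion.2 ⟨u.length, Finset.mem_Icc.2 ⟨hu1, by omega⟩, ?_⟩
      exact Finset.mem_filter.2 ⟨hp, s, u, rfl, hu, hz⟩
    refine (Finset.card_le_card hsub).trans ((Finset.card_biUnion_le).trans ?_)
    apply Finset.sum_le_sum
    intro ℓ hℓ
    rw [Finset.mem_Icc] at hℓ
    apply Finset.card_le_card_of_injOn (fun p => (p.1 ++ [p.2]).take (n+1-ℓ))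
    · intro p hp
      rw [Finset.mem_coe, Finset.mem_filter] at hp
      obtain ⟨hp, s, u, hul, hu, hz⟩ := hp
      rw [hBdef, Finset.mem_filter, hEdef, Finset.mem_product, mem_LF] at hp
      obtain ⟨⟨⟨hlen, hsf⟩, _⟩, _⟩ := hp
      have htake : (p.1 ++ [p.2]).take (n+1-ℓ) = p.1.take (n+1-ℓ) := takeApp (by omega)
      simp only [Finset.mem_coe]; rw [mem_LF, htake]
      refine ⟨by simp [hlen]; omega, sqfree_take hsf _⟩
    · intro p hp q hq heq
      simp only at heq
      rw [Finset.mem_coe, Finset.mem_filter] at hp hq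
      obtain ⟨hpB, s, u, hul, hu, hz⟩ := hp
      obtain ⟨hqB, s', u', hul', hu', hz'⟩ := hq
      rw [hBdef, Finset.mem_filter, hEdef, Finset.mem_product, mem_LF] at hpB hqB
      have hlen : p.1.length = n := hpB.1.1.1
      have hlen' : q.1.length = n := hqB.1.1.1
      have hlz : n + 1 = s.length + ℓ + ℓ := by
        have := congrArg List.length hz
        simp [hlen, hul] at this; omega
      have hlz' : n + 1 = s'.length + ℓ + ℓ := by
        have := congrArg List.length hz'
        simp [hlen', hul'] at this; omega
      have key : ∀ (w : List A) (b : A) (sw uw : List A), uw.length = ℓ → w.length = n →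
          w ++ [b] = sw ++ uw ++ uw → n + 1 = sw.length + ℓ + ℓ →
          w ++ [b] = (w ++ [b]).take (n+1-ℓ) ++ ((w ++ [b]).take (n+1-ℓ)).drop (n+1-2*ℓ) := by
        intro w b sw uw hulw hlw hzw hlzw
        have h1 : (w ++ [b]).take (n+1-ℓ) = sw ++ uw := by
          rw [hzw]
          exact List.take_left' (by simp only [List.length_append, hulw]; omega)
        rw [h1]
        have h2 : (sw ++ uw).drop (n+1-2*ℓ) = uw := List.drop_left' (by omega)
        rw [h2, hzw, List.append_assoc]
      have e1 := key p.1 p.2 s u hul hlen hz hlz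
      have e2 := key q.1 q.2 s' u' hul' hlen' hz' hlz'
      rw [heq] at e1
      have : p.1 ++ [p.2] = q.1 ++ [q.2] := e1.trans e2.symm
      obtain ⟨h1, h2⟩ := List.append_inj' this rfl
      exact Prod.ext h1 (by simpa using h2)
  omega

/-- `z` has a square of period `ℓ` starting at position `i`. -/
def HasSqAt (z : List A) (i ℓ : ℕ) : Prop :=
  ∃ s u t : List A, s.length = i ∧ u.length = ℓ ∧ u ≠ [] ∧ z = s ++ u ++ u ++ t

open Classical in
noncomputable def SBad (A : Type*) [Fintype A] (n m i ℓ : ℕ) : Finset (List A × List A) :=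
  ((LF A n) ×ˢ (LF A m)).filter (fun p => HasSqAt (p.1 ++ p.2) i ℓ)

lemma N3cover (n m : ℕ) :
    (LF A n).card * (LF A m).card ≤ (LF A (n+m)).card +
      ∑ ℓ ∈ Finset.Icc 1 (n+m), ∑ i ∈ Finset.Ico (n+1-2*ℓ) n, (SBad A n m i ℓ).card := by
  classical
  set E := (LF A n) ×ˢ (LF A m) with hEdef
  have hE : E.card = (LF A n).card * (LF A m).card := by simp [hEdef]
  set G := E.filter (fun p => SqFree (p.1 ++ p.2)) with hGdef
  set B := E.filter (fun p => ¬ SqFree (p.1 ++ p.2)) with hBdef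
  have hGB : G.card + B.card = E.card := Finset.card_filter_add_card_filter_not _
  have hG : G.card ≤ (LF A (n+m)).card := by
    apply Finset.card_le_card_of_injOn (fun p => p.1 ++ p.2)
    · intro p hp
      rw [hGdef, Finset.mem_coe, Finset.mem_filter, hEdef, Finset.mem_product, mem_LF, mem_LF] at hp
      rw [Finset.mem_coe, mem_LF]
      exact ⟨by simp [hp.1.1.1, hp.1.2.1], hp.2⟩
    · intro p hp q hq hpq
      rw [Finset.mem_coe, hGdef, Finset.mem_filter, hEdef, Finset.mem_product, mem_LF, mem_LF] at hp hq
      simp only at hpq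
      obtain ⟨h1, h2⟩ := List.append_inj hpq (by rw [hp.1.1.1, hq.1.1.1])
      exact Prod.ext h1 h2
  have hB : B.card ≤ ∑ ℓ ∈ Finset.Icc 1 (n+m), ∑ i ∈ Finset.Ico (n+1-2*ℓ) n, (SBad A n m i ℓ).card := by
    have hsub : B ⊆ (Finset.Icc 1 (n+m)).biUnion (fun ℓ =>
        (Finset.Ico (n+1-2*ℓ) n).biUnion (fun i => SBad A n m i ℓ)) := by
      intro p hp
      have hp' := hp
      rw [hBdef, Finset.mem_filter, hEdef, Finset.mem_product, mem_LF, mem_LF] at hp'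
      obtain ⟨⟨⟨hxl, hxs⟩, ⟨hyl, hys⟩⟩, hnsf⟩ := hp'
      obtain ⟨s, u, t, hu, hz⟩ := not_sqFree_iff.1 hnsf
      set i := s.length with hidef
      set ℓ := u.length with hldef
      have hu1 : 1 ≤ ℓ := List.length_pos_iff.2 hu
      have hlenz : n + m = i + ℓ + ℓ + t.length := by
        have := congrArg List.length hz
        simp [hxl, hyl] at this; omega
      -- the square is not inside x
      have hni1 : ¬ (i + 2*ℓ ≤ n) := by
        intro hle
        apply hxs u hu
        have hpre : (s ++ u ++ u) <+: p.1 := by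
          have h1 : (p.1 ++ p.2).take (i+2*ℓ) = s ++ u ++ u := by
            rw [hz]
            exact List.take_left' (by simp [hidef, hldef]; omega)
          have h2 : (p.1 ++ p.2).take (i+2*ℓ) <+: (p.1 ++ p.2).take n :=
            List.take_prefix_take_left hle
          rw [h1, takeApp hxl.ge, List.take_of_length_le hxl.le] at h2
          exact h2
        obtain ⟨t2, ht2⟩ := hpre
        exact ⟨s, t2, by rw [← ht2]; simp [List.append_assoc]⟩
      -- the square is not inside y
      have hni2 : ¬ (n ≤ i) := by
        intro hle
        apply hys u hu
        have hy : p.2 = s.drop n ++ (u ++ u ++ t) := by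
          have hyd : p.2 = (p.1 ++ p.2).drop n := by
            rw [dropApp hxl.le, hxl, Nat.sub_self, List.drop_zero]
          rw [hyd, hz, List.append_assoc s u u, List.append_assoc s (u++u) t]
          rw [dropApp2 (by omega)]
        exact ⟨s.drop n, t, by rw [hy]; simp [List.append_assoc]⟩
      refine Finset.mem_biUnion.2 ⟨ℓ, Finset.mem_Icc.2 ⟨hu1, by omega⟩,
        Finset.mem_biUnion.2 ⟨i, Finset.mem_Ico.2 ⟨by omega, by omega⟩, ?_⟩⟩
      rw [SBad, Finset.mem_filter]
      refine ⟨(Finset.mem_filter.mp hp).1, s, u, t, rfl, rfl, hu, hz⟩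
    refine (Finset.card_le_card hsub).trans ((Finset.card_biUnion_le).trans ?_)
    exact Finset.sum_le_sum (fun ℓ _ => Finset.card_biUnion_le)
  omega

lemma SBad_empty {n m i ℓ : ℕ} (h : n + m < i + 2*ℓ) : (SBad A n m i ℓ) = ∅ := by
  classical
  rw [Finset.eq_empty_iff_forall_notMem]
  intro p hp
  rw [SBad, Finset.mem_filter] at hp
  obtain ⟨hpE, s, u, t, hsl, hul, hu, hz⟩ := hp
  rw [Finset.mem_product, mem_LF, mem_LF] at hpE
  have := congrArg List.length hz
  simp [hpE.1.1, hpE.2.1, hsl, hul] at this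
  omega

lemma SBad_card_le {n m i ℓ : ℕ} (h1 : 1 ≤ ℓ) (hi : i < n) (h2 : n + 1 ≤ i + 2*ℓ) (h3 : i + 2*ℓ ≤ n + m) :
    (SBad A n m i ℓ).card ≤
      if i + ℓ ≤ n then (LF A (i+ℓ)).card * (LF A (n+m-i-2*ℓ)).card
      else (LF A i).card * (LF A (n+m-i-ℓ)).card := by
  classical
  -- basic membership facts
  have hmem : ∀ p ∈ SBad A n m i ℓ, p.1.length = n ∧ SqFree p.1 ∧ p.2.length = m ∧ SqFree p.2 ∧
      ∃ s u t : List A, s.length = i ∧ u.length = ℓ ∧ t.length = n+m-i-2*ℓ ∧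
        p.1 ++ p.2 = s ++ u ++ u ++ t := by
    intro p hp
    rw [SBad, Finset.mem_filter] at hp
    obtain ⟨hpE, s, u, t, hsl, hul, hu, hz⟩ := hp
    rw [Finset.mem_product, mem_LF, mem_LF] at hpE
    have hlt : t.length = n+m-i-2*ℓ := by
      have := congrArg List.length hz
      simp [hpE.1.1, hpE.2.1, hsl, hul] at this
      omega
    exact ⟨hpE.1.1, hpE.1.2, hpE.2.1, hpE.2.2, s, u, t, hsl, hul, hlt, hz⟩
  by_cases hc : i + ℓ ≤ n
  · rw [if_pos hc, ← Finset.card_product]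
    apply Finset.card_le_card_of_injOn
      (fun p => ((p.1 ++ p.2).take (i+ℓ), (p.1 ++ p.2).drop (i+2*ℓ)))
    · intro p hp
      obtain ⟨hxl, hxs, hyl, hys, s, u, t, hsl, hul, hlt, hz⟩ := hmem p hp
      simp only [Finset.mem_coe]; rw [Finset.mem_product, mem_LF, mem_LF]
      refine ⟨⟨?_, ?_⟩, ?_, ?_⟩
      · simp only [List.length_take, List.length_append, hxl, hyl]; omega
      · rw [takeApp (by rw [hxl]; omega)]; exact sqfree_take hxs _
      · simp only [List.length_drop, List.length_append, hxl, hyl]; omega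
      · rw [dropApp (by rw [hxl]; omega), hxl]; exact sqfree_drop hys _
    · have hrec : ∀ p ∈ SBad A n m i ℓ, p.1 ++ p.2 =
          (p.1++p.2).take (i+ℓ) ++ (((p.1++p.2).take (i+ℓ)).drop i ++ (p.1++p.2).drop (i+2*ℓ)) := by
        intro p hp
        obtain ⟨hxl, hxs, hyl, hys, s, u, t, hsl, hul, hlt, hz⟩ := hmem p hp
        have e1 : (p.1++p.2).take (i+ℓ) = s ++ u := by
          rw [hz, List.append_assoc (s++u) u t]
          exact List.take_left' (by simp only [List.length_append, hsl, hul])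
        have e2 : (s ++ u).drop i = u := List.drop_left' hsl
        have e3 : (p.1++p.2).drop (i+2*ℓ) = t := by
          rw [hz]
          exact List.drop_left' (by simp only [List.length_append, hsl, hul]; omega)
        rw [e1, e2, e3, hz]
        simp [List.append_assoc]
      intro p hp q hq heq
      rw [Finset.mem_coe] at hp hq
      simp only [Prod.mk.injEq] at heq
      have hzz : p.1 ++ p.2 = q.1 ++ q.2 := by
        rw [hrec p hp, hrec q hq, heq.1, heq.2]
      have hxl := (hmem p hp).1
      have hxl' := (hmem q hq).1
      obtain ⟨e1, e2⟩ := List.append_inj hzz (by rw [hxl, hxl'])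
      exact Prod.ext e1 e2
  · rw [if_neg hc, ← Finset.card_product]
    apply Finset.card_le_card_of_injOn
      (fun p => ((p.1 ++ p.2).take i, (p.1 ++ p.2).drop (i+ℓ)))
    · intro p hp
      obtain ⟨hxl, hxs, hyl, hys, s, u, t, hsl, hul, hlt, hz⟩ := hmem p hp
      simp only [Finset.mem_coe]; rw [Finset.mem_product, mem_LF, mem_LF]
      refine ⟨⟨?_, ?_⟩, ?_, ?_⟩
      · simp only [List.length_take, List.length_append, hxl, hyl]; omega
      · rw [takeApp (by rw [hxl]; omega)]; exact sqfree_take hxs _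
      · simp only [List.length_drop, List.length_append, hxl, hyl]; omega
      · rw [dropApp (by rw [hxl]; omega), hxl]; exact sqfree_drop hys _
    · have hrec : ∀ p ∈ SBad A n m i ℓ, p.1 ++ p.2 =
          (p.1++p.2).take i ++ (((p.1++p.2).drop (i+ℓ)).take ℓ ++ (p.1++p.2).drop (i+ℓ)) := by
        intro p hp
        obtain ⟨hxl, hxs, hyl, hys, s, u, t, hsl, hul, hlt, hz⟩ := hmem p hp
        have e1 : (p.1++p.2).take i = s := by
          rw [hz, List.append_assoc s u u, List.append_assoc s (u++u) t]
          exact List.take_left' hsl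
        have e2 : (p.1++p.2).drop (i+ℓ) = u ++ t := by
          rw [hz, List.append_assoc (s++u) u t]
          exact List.drop_left' (by simp only [List.length_append, hsl, hul])
        have e3 : (u ++ t).take ℓ = u := List.take_left' hul
        rw [e1, e2, e3, hz]
        simp [List.append_assoc]
      intro p hp q hq heq
      rw [Finset.mem_coe] at hp hq
      simp only [Prod.mk.injEq] at heq
      have hzz : p.1 ++ p.2 = q.1 ++ q.2 := by
        rw [hrec p hp, hrec q hq, heq.1, heq.2]
      have hxl := (hmem p hp).1
      have hxl' := (hmem q hq).1
      obtain ⟨e1, e2⟩ := List.append_inj hzz (by rw [hxl, hxl'])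
      exact Prod.ext e1 e2

noncomputable def sR (A : Type*) [Fintype A] (n : ℕ) : ℝ := ((LF A n).card : ℝ)

lemma sR_nonneg (n : ℕ) : 0 ≤ sR A n := Nat.cast_nonneg _

lemma grow (hb : β^2 = (Fintype.card A : ℝ)*β - (Fintype.card A : ℝ)) (hb3 : 3 ≤ β)
    (n : ℕ) : β * sR A n ≤ sR A (n+1) := by
  induction n using Nat.strong_induction_on with
  | _ n IH =>
  have hβ0 : (0:ℝ) < β := by linarith
  have hβ1 : (1:ℝ) < β := by linarith
  have key : ∀ d, d ≤ n → β^d * sR A (n-d) ≤ sR A n := by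
    intro d
    induction d with
    | zero => intro _; simp
    | succ d hd =>
      intro hdn
      have hd' : β^d * sR A (n-d) ≤ sR A n := hd (by omega)
      have hg : β * sR A (n-(d+1)) ≤ sR A (n-(d+1)+1) := IH (n-(d+1)) (by omega)
      have heq : n-(d+1)+1 = n-d := by omega
      rw [heq] at hg
      calc β^(d+1) * sR A (n-(d+1)) = β^d * (β * sR A (n-(d+1))) := by ring
        _ ≤ β^d * sR A (n-d) := mul_le_mul_of_nonneg_left hg (pow_nonneg (by linarith) d)
        _ ≤ sR A n := hd'
  have hx1 : 1/β < 1 := by rw [div_lt_one hβ0]; linarith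
  have hx0 : (0:ℝ) ≤ 1/β := by positivity
  have hs : ∀ ℓ ∈ Finset.Icc 1 n, sR A (n+1-ℓ) ≤ sR A n * (1/β)^(ℓ-1) := by
    intro ℓ hℓ
    rw [Finset.mem_Icc] at hℓ
    have hk := key (ℓ-1) (by omega)
    have heq : n - (ℓ-1) = n+1-ℓ := by omega
    rw [heq] at hk
    rw [one_div, inv_pow, mul_comm (sR A n), ← div_eq_inv_mul, le_div_iff₀ (pow_pos hβ0 _)]
    linear_combination hk
  have hsum : ∑ ℓ ∈ Finset.Icc 1 n, sR A (n+1-ℓ) ≤ sR A n * (1-1/β)⁻¹ := by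
    calc ∑ ℓ ∈ Finset.Icc 1 n, sR A (n+1-ℓ)
        ≤ ∑ ℓ ∈ Finset.Icc 1 n, sR A n * (1/β)^(ℓ-1) := Finset.sum_le_sum hs
      _ = sR A n * ∑ ℓ ∈ Finset.Icc 1 n, (1/β)^(ℓ-1) := by rw [Finset.mul_sum]
      _ ≤ sR A n * (1-1/β)⁻¹ := by
          apply mul_le_mul_of_nonneg_left ?_ (sR_nonneg _)
          have hre : ∑ ℓ ∈ Finset.Icc 1 n, (1/β)^(ℓ-1) = ∑ j ∈ Finset.range n, (1/β)^j := by
            rw [show Finset.Icc 1 n = Finset.Ico 1 (n+1) by rw [Finset.Ico_add_one_right_eq_Icc],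
              Finset.sum_Ico_eq_sum_range]
            simp
          rw [hre]
          exact sum_le_hasSum _ (fun i _ => pow_nonneg hx0 i) (hasSum_geometric_of_lt_one hx0 hx1)
  have hcast : (Fintype.card A : ℝ) * sR A n ≤ sR A (n+1) + ∑ ℓ ∈ Finset.Icc 1 n, sR A (n+1-ℓ) := by
    have h := (Nat.cast_le (α := ℝ)).2 (count_ext (A := A) n)
    push_cast at h
    simpa [sR] using h
  have hgeom : ((1:ℝ)-1/β)⁻¹ = β/(β-1) := by
    rw [show (1:ℝ)-1/β = (β-1)/β by field_simp, inv_div]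
  have hk2 : (Fintype.card A : ℝ) = β + β/(β-1) := by
    have hne : β - 1 ≠ 0 := by linarith
    field_simp
    linear_combination -hb
  have e1 : (Fintype.card A : ℝ) * sR A n = β * sR A n + (β/(β-1)) * sR A n := by rw [hk2]; ring
  have e2 : sR A n * (1-1/β)⁻¹ = (β/(β-1)) * sR A n := by rw [hgeom]; ring
  linarith

lemma chain (hb : β^2 = (Fintype.card A : ℝ)*β - (Fintype.card A : ℝ)) (hb3 : 3 ≤ β)
    (c d : ℕ) : β^d * sR A c ≤ sR A (c+d) := by
  induction d with
  | zero => simp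
  | succ d ih =>
    calc β^(d+1) * sR A c = β * (β^d * sR A c) := by ring
      _ ≤ β * sR A (c+d) := mul_le_mul_of_nonneg_left ih (by linarith)
      _ ≤ sR A (c+d+1) := grow hb hb3 (c+d)

lemma prod_le (hb : β^2 = (Fintype.card A : ℝ)*β - (Fintype.card A : ℝ)) (hb3 : 3 ≤ β)
    {c1 d1 c2 d2 n m ℓ : ℕ} (e1 : c1+d1 = n) (e2 : c2+d2 = m) (e3 : d1+d2 = ℓ) :
    sR A c1 * sR A c2 ≤ sR A n * sR A m * (1/β)^ℓ := by
  have hβ0 : (0:ℝ) < β := by linarith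
  have h1 := chain hb hb3 c1 d1
  have h2 := chain hb hb3 c2 d2
  rw [e1] at h1
  rw [e2] at h2
  have hmul : (β^d1 * sR A c1) * (β^d2 * sR A c2) ≤ sR A n * sR A m :=
    mul_le_mul h1 h2 (mul_nonneg (pow_nonneg (by linarith) _) (sR_nonneg _)) (sR_nonneg _)
  have hkey : β^ℓ * (sR A c1 * sR A c2) ≤ sR A n * sR A m := by
    calc β^ℓ * (sR A c1 * sR A c2) = (β^d1 * sR A c1) * (β^d2 * sR A c2) := by
          rw [← e3, pow_add]; ring
      _ ≤ sR A n * sR A m := hmul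
  rw [one_div, inv_pow, ← div_eq_mul_inv, le_div_iff₀ (pow_pos hβ0 _)]
  linear_combination hkey
lemma sum231 {x : ℝ} (h0 : 0 < x) (h1 : x < 1) (L : ℕ) :
    ∑ ℓ ∈ Finset.Icc 1 L, (2*(ℓ:ℝ)-1) * x^ℓ ≤ 2*(x/(1-x)^2) - (1-x)⁻¹ + 1 := by
  set g : ℕ → ℝ := fun ℓ => 2*(ℓ*x^ℓ) - x^ℓ + (if ℓ = 0 then 1 else 0) with hg
  have hnorm : ‖x‖ < 1 := by rw [Real.norm_eq_abs, abs_of_pos h0]; exact h1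
  have hsumg : HasSum g (2*(x/(1-x)^2) - (1-x)⁻¹ + 1) := by
    have h1' := (hasSum_coe_mul_geometric_of_norm_lt_one hnorm).mul_left 2
    have h2' := hasSum_geometric_of_lt_one h0.le h1
    have h3' := hasSum_ite_eq (0:ℕ) (1:ℝ)
    exact (h1'.sub h2').add h3'
  have hgeq : ∀ ℓ ∈ Finset.Icc 1 L, (2*(ℓ:ℝ)-1) * x^ℓ = g ℓ := by
    intro ℓ hℓ
    rw [Finset.mem_Icc] at hℓ
    have hne : ℓ ≠ 0 := by omega
    simp only [hg, if_neg hne, add_zero]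
    ring
  rw [Finset.sum_congr rfl hgeq]
  apply sum_le_hasSum _ ?_ hsumg
  intro ℓ _
  rcases Nat.eq_zero_or_pos ℓ with rfl | hp
  · simp [hg]
  · have hne : ℓ ≠ 0 := by omega
    have h1n : (1:ℝ) ≤ (ℓ:ℝ) := by exact_mod_cast hp
    simp only [hg, if_neg hne, add_zero]
    have hxp := pow_nonneg h0.le ℓ
    nlinarith

lemma main_bound (hb : β^2 = (Fintype.card A : ℝ)*β - (Fintype.card A : ℝ)) (hb3 : 3 ≤ β)
    (n m : ℕ) :
    sR A n * sR A m ≤ sR A (n+m) +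
      (2*((1/β)/(1-1/β)^2) - (1-1/β)⁻¹ + 1) * (sR A n * sR A m) := by
  have hβ0 : (0:ℝ) < β := by linarith
  have hx0 : (0:ℝ) < 1/β := by positivity
  have hx1 : 1/β < 1 := by rw [div_lt_one hβ0]; linarith
  have hcast : sR A n * sR A m ≤ sR A (n+m) +
      ∑ ℓ ∈ Finset.Icc 1 (n+m), ∑ i ∈ Finset.Ico (n+1-2*ℓ) n, ((SBad A n m i ℓ).card : ℝ) := by
    have h := (Nat.cast_le (α := ℝ)).2 (N3cover (A := A) n m)
    push_cast at h
    simpa [sR] using h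
  have hper : ∀ ℓ ∈ Finset.Icc 1 (n+m), ∀ i ∈ Finset.Ico (n+1-2*ℓ) n,
      ((SBad A n m i ℓ).card : ℝ) ≤ sR A n * sR A m * (1/β)^ℓ := by
    intro ℓ hℓ i hi
    rw [Finset.mem_Icc] at hℓ
    rw [Finset.mem_Ico] at hi
    have h2 : n + 1 ≤ i + 2*ℓ := by omega
    by_cases h3 : i + 2*ℓ ≤ n + m
    · have hcard := SBad_card_le (A := A) (n := n) (m := m) hℓ.1 hi.2 h2 h3
      by_cases hc : i + ℓ ≤ n
      · rw [if_pos hc] at hcard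
        have hple := prod_le hb hb3 (show (i+ℓ) + (n-i-ℓ) = n by omega)
            (show (n+m-i-2*ℓ) + (i+2*ℓ-n) = m by omega) (show (n-i-ℓ) + (i+2*ℓ-n) = ℓ by omega)
        calc ((SBad A n m i ℓ).card : ℝ)
            ≤ (((LF A (i+ℓ)).card * (LF A (n+m-i-2*ℓ)).card : ℕ) : ℝ) := by exact_mod_cast hcard
          _ = sR A (i+ℓ) * sR A (n+m-i-2*ℓ) := by push_cast [sR]; ring
          _ ≤ _ := hple
      · rw [if_neg hc] at hcard
        have hple := prod_le hb hb3 (show i + (n-i) = n by omega)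
            (show (n+m-i-ℓ) + (i+ℓ-n) = m by omega) (show (n-i) + (i+ℓ-n) = ℓ by omega)
        calc ((SBad A n m i ℓ).card : ℝ)
            ≤ (((LF A i).card * (LF A (n+m-i-ℓ)).card : ℕ) : ℝ) := by exact_mod_cast hcard
          _ = sR A i * sR A (n+m-i-ℓ) := by push_cast [sR]; ring
          _ ≤ _ := hple
    · rw [SBad_empty (by omega)]
      simp only [Finset.card_empty, Nat.cast_zero]
      exact mul_nonneg (mul_nonneg (sR_nonneg _) (sR_nonneg _)) (pow_nonneg hx0.le _)
  have hinner : ∀ ℓ ∈ Finset.Icc 1 (n+m),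
      ∑ i ∈ Finset.Ico (n+1-2*ℓ) n, ((SBad A n m i ℓ).card : ℝ) ≤
        (2*(ℓ:ℝ)-1) * (1/β)^ℓ * (sR A n * sR A m) := by
    intro ℓ hℓ
    have hℓ' := Finset.mem_Icc.1 hℓ
    calc ∑ i ∈ Finset.Ico (n+1-2*ℓ) n, ((SBad A n m i ℓ).card : ℝ)
        ≤ (Finset.Ico (n+1-2*ℓ) n).card • (sR A n * sR A m * (1/β)^ℓ) :=
          Finset.sum_le_card_nsmul _ _ _ (hper ℓ hℓ)
      _ = ((Finset.Ico (n+1-2*ℓ) n).card : ℝ) * (sR A n * sR A m * (1/β)^ℓ) := by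
          rw [nsmul_eq_mul]
      _ ≤ (2*(ℓ:ℝ)-1) * (sR A n * sR A m * (1/β)^ℓ) := by
          apply mul_le_mul_of_nonneg_right ?_ (by
            exact mul_nonneg (mul_nonneg (sR_nonneg _) (sR_nonneg _)) (pow_nonneg hx0.le _))
          rw [Nat.card_Ico]
          have hle : n - (n+1-2*ℓ) ≤ 2*ℓ-1 := by omega
          calc ((n - (n+1-2*ℓ) : ℕ) : ℝ) ≤ ((2*ℓ-1 : ℕ) : ℝ) := by exact_mod_cast hle
            _ = 2*(ℓ:ℝ)-1 := by
                have : 1 ≤ 2*ℓ := by omega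
                push_cast [this]
                ring
      _ = (2*(ℓ:ℝ)-1) * (1/β)^ℓ * (sR A n * sR A m) := by ring
  calc sR A n * sR A m
      ≤ sR A (n+m) + ∑ ℓ ∈ Finset.Icc 1 (n+m), ∑ i ∈ Finset.Ico (n+1-2*ℓ) n,
          ((SBad A n m i ℓ).card : ℝ) := hcast
    _ ≤ sR A (n+m) + ∑ ℓ ∈ Finset.Icc 1 (n+m), (2*(ℓ:ℝ)-1) * (1/β)^ℓ * (sR A n * sR A m) := by
        exact add_le_add_right (Finset.sum_le_sum hinner) _
    _ = sR A (n+m) + (∑ ℓ ∈ Finset.Icc 1 (n+m), (2*(ℓ:ℝ)-1) * (1/β)^ℓ) * (sR A n * sR A m) := by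
        rw [Finset.sum_mul]
    _ ≤ sR A (n+m) + (2*((1/β)/(1-1/β)^2) - (1-1/β)⁻¹ + 1) * (sR A n * sR A m) := by
        apply add_le_add_right
        apply mul_le_mul_of_nonneg_right (sum231 hx0 hx1 (n+m))
          (mul_nonneg (sR_nonneg _) (sR_nonneg _))
end SqAux

/-- For an alphabet with `|𝒜| ≥ 5`, `β = (|𝒜| + √(|𝒜|² − 4|𝒜|))/2` and
`C = 1 − (1+β)/(β−1)²`, one has `C > 0` and
`|ℒ_{n+m}(𝒜,2)| ≥ C·|ℒ_n(𝒜,2)|·|ℒ_m(𝒜,2)|` for all `n, m ≥ 0`. -/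
theorem stmt11 {A : Type*} [Fintype A] (hA : 5 ≤ Fintype.card A) (β C : ℝ)
    (hβ : β = ((Fintype.card A : ℝ) +
      Real.sqrt ((Fintype.card A : ℝ) ^ 2 - 4 * (Fintype.card A : ℝ))) / 2)
    (hC : C = 1 - (1 + β) / (β - 1) ^ 2) :
    0 < C ∧ ∀ n m : ℕ,
      C * ((sqLangN A n).ncard : ℝ) * ((sqLangN A m).ncard : ℝ) ≤
        ((sqLangN A (n + m)).ncard : ℝ) := by
  have hk5 : (5:ℝ) ≤ (Fintype.card A : ℝ) := by exact_mod_cast hA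
  set k : ℝ := (Fintype.card A : ℝ) with hk
  have hd : 0 ≤ k^2 - 4*k := by nlinarith
  have hsq2 : (2:ℝ) ≤ Real.sqrt (k^2 - 4*k) := by
    have h4 : ((2:ℝ))^2 ≤ k^2 - 4*k := by nlinarith
    nlinarith [Real.sq_sqrt hd, Real.sqrt_nonneg (k^2-4*k)]
  have hb3 : 3 ≤ β := by rw [hβ]; linarith
  have hb : β^2 = k*β - k := by
    have hss : Real.sqrt (k^2-4*k) ^ 2 = k^2-4*k := Real.sq_sqrt hd
    have h2b : 2*β - k = Real.sqrt (k^2-4*k) := by rw [hβ]; ring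
    nlinarith [h2b, hss]
  have hb1 : β - 1 ≠ 0 := by intro h; nlinarith
  have hβ0 : (0:ℝ) < β := by linarith
  have hCpos : 0 < C := by
    rw [hC]
    have hlt : (1+β)/(β-1)^2 < 1 := by
      rw [div_lt_one (by nlinarith)]
      nlinarith
    linarith
  refine ⟨hCpos, fun n m => ?_⟩
  have hmain := SqAux.main_bound (A := A) (β := β) hb hb3 n m
  have heq : 2*((1/β)/(1-1/β)^2) - (1-1/β)⁻¹ + 1 = (1+β)/(β-1)^2 := by
    have h2 : 1 - 1/β ≠ 0 := by
      rw [show (1:ℝ) - 1/β = (β-1)/β by field_simp]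
      exact div_ne_zero hb1 hβ0.ne'
    field_simp
    ring
  rw [heq] at hmain
  rw [SqAux.ncard_LF, SqAux.ncard_LF, SqAux.ncard_LF]
  calc C * ((SqAux.LF A n).card : ℝ) * ((SqAux.LF A m).card : ℝ)
      = SqAux.sR A n * SqAux.sR A m - (1+β)/(β-1)^2 * (SqAux.sR A n * SqAux.sR A m) := by
        rw [hC]; simp only [SqAux.sR]; ring
    _ ≤ ((SqAux.LF A (n+m)).card : ℝ) := by
        have : SqAux.sR A (n+m) = ((SqAux.LF A (n+m)).card : ℝ) := rfl
        linarith [hmain]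
end

section
/- Let 𝒜 be a finite alphabet with |𝒜| ≥ 5, let β = (|𝒜| + √(|𝒜|² − 4|𝒜|))/2 and C = 1 − (1+β)/(β−1)². Then C > 0 and for all n ≥ 0, |L̊_n(𝒜,2)| ≥ C·|ℒ_n(𝒜,2)|. -/
open Filter

/-- The set of circularly square-free words of length `n` over `A`:
every rotation (conjugate) of the word is square-free. -/
def csqLangN (A : Type*) (n : ℕ) : Set (List A) :=
  {w | w.length = n ∧ ∀ k : ℕ, SqFree (w.rotate k)}

namespace Stmt13Aux

variable {A : Type*}

lemma sqFree_of_infix {v w : List A} (h : SqFree w) (hvw : v <:+: w) : SqFree v :=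
  fun u hu huv => h u hu (huv.trans hvw)

lemma sqLangN_finite (A : Type*) [Finite A] (n : ℕ) : (sqLangN A n).Finite :=
  (List.finite_length_eq A n).subset fun _ h => h.1

lemma csq_subset (A : Type*) (n : ℕ) : csqLangN A n ⊆ sqLangN A n := fun w hw =>
  ⟨hw.1, by simpa using hw.2 0⟩

/-- bound on the ncard of a finite biUnion -/
lemma ncard_biUnion_le {β : Type*} (m : ℕ) (T : ℕ → Set β) :
    (⋃ i ∈ Finset.range m, T i).ncard ≤ ∑ i ∈ Finset.range m, (T i).ncard := by
  induction m with
  | zero => simp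
  | succ m ih =>
    rw [Finset.range_add_one, Finset.sum_insert (by simp)]
    have h1 : (⋃ i ∈ insert m (Finset.range m), T i)
        = T m ∪ ⋃ i ∈ Finset.range m, T i := by
      simp
    rw [h1]
    exact (Set.ncard_union_le _ _).trans (by omega)

/-- the structure of a one-letter extension of a square-free word that is not square-free -/
lemma extension_structure {n : ℕ} {w : List A} (hlen : w.length = n + 1)
    (hpre : SqFree (w.take n)) (hnsf : ¬ SqFree w) :
    ∃ i ∈ Finset.range (n + 1), ∃ v ∈ sqLangN A (n - i),
      w = v ++ v.drop (v.length - (i + 1)) := by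
  simp only [SqFree, not_forall, not_not] at hnsf
  obtain ⟨u, hu, hinf⟩ := hnsf
  obtain ⟨a, b, hab⟩ := hinf
  have hulen : 1 ≤ u.length := List.length_pos_iff.mpr hu
  rcases eq_or_ne b [] with rfl | hb
  · -- square is a suffix : w = (a ++ u) ++ u
    have hw : w = (a ++ u) ++ u := by
      rw [← hab]; simp
    have hlens : a.length + u.length + u.length = n + 1 := by
      have := congrArg List.length hw
      simp only [List.length_append] at this; omega
    refine ⟨u.length - 1, Finset.mem_range.mpr (by omega), a ++ u, ⟨?_, ?_⟩, ?_⟩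
    · simp only [List.length_append]; omega
    · -- a ++ u is square-free : it is a prefix of w.take n
      apply sqFree_of_infix hpre
      refine (List.prefix_take_iff.mpr ⟨⟨u, hw.symm⟩, ?_⟩).isInfix
      simp only [List.length_append]; omega
    · have h2 : u.length - 1 + 1 = u.length := by omega
      rw [h2, hw]
      congr 1
      rw [List.drop_append]
      simp [List.length_append]
  · -- square is internal : contradiction with square-freeness of w.take n
    exfalso
    have hblen : 1 ≤ b.length := List.length_pos_iff.mpr hb
    have hlens : a.length + (u.length + u.length) + b.length = n + 1 := by
      have := congrArg List.length hab
      simp only [List.length_append] at this; omega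
    apply hpre u hu
    have hpref : (a ++ (u ++ u)) <+: w.take n := by
      refine List.prefix_take_iff.mpr ⟨⟨b, hab⟩, ?_⟩
      simp only [List.length_append]; omega
    exact (List.IsInfix.trans ⟨a, [], by simp⟩ hpref.isInfix)

/-- the reconstruction function for circular squares -/
def recon (p t : ℕ) (v : List A) : List A :=
  if t ≤ p then (v.take p).drop t ++ v ++ (v.take p).take t
  else (v.drop (v.length - p)).drop (t - p) ++ v ++ (v.drop (v.length - p)).take (t - p)

lemma rot_small {u r : List A} {t : ℕ} (h : t ≤ u.length) :
    (u ++ u ++ r).rotate t = u.drop t ++ (u ++ r) ++ u.take t := by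
  rw [List.rotate_eq_drop_append_take (by simp only [List.length_append]; omega),
    List.drop_append_of_le_length (by simp only [List.length_append]; omega),
    List.drop_append_of_le_length h,
    List.take_append_of_le_length (by simp only [List.length_append]; omega),
    List.take_append_of_le_length h]
  simp [List.append_assoc]

lemma rot_mid {u r : List A} {t : ℕ} (h1 : u.length ≤ t) (h2 : t ≤ 2 * u.length) :
    (u ++ u ++ r).rotate t
      = u.drop (t - u.length) ++ (r ++ u) ++ u.take (t - u.length) := by
  have ht : t = u.length + (t - u.length) := by omega
  rw [List.rotate_eq_drop_append_take (by simp only [List.length_append]; omega),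
    List.drop_append_of_le_length (by simp only [List.length_append]; omega),
    List.take_append_of_le_length (by simp only [List.length_append]; omega)]
  rw [ht, List.drop_length_add_append, List.take_length_add_append]
  simp [List.append_assoc]

lemma rot_big {u r : List A} {t : ℕ} (h1 : 2 * u.length ≤ t)
    (h : t ≤ (u ++ u ++ r).length) :
    (u ++ u ++ r).rotate t
      = (u ++ u ++ r).drop t ++ (u ++ u) ++ r.take (t - 2 * u.length) := by
  have ht : t = (u ++ u).length + (t - 2 * u.length) := by
    simp only [List.length_append]; omega
  have htake : (u ++ u ++ r).take t = (u ++ u) ++ r.take (t - 2 * u.length) := by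
    conv_lhs => rw [ht]
    exact List.take_length_add_append _
  rw [List.rotate_eq_drop_append_take h, htake]
  simp [List.append_assoc]

/-- structure of a square-free word which is not circularly square-free -/
lemma circ_structure {n : ℕ} {w : List A} (hw : w ∈ sqLangN A n)
    (hbad : ¬ ∀ k : ℕ, SqFree (w.rotate k)) :
    ∃ i ∈ Finset.range n, ∃ t ∈ Finset.range (2 * i + 1), ∃ v ∈ sqLangN A (n - (i + 1)),
      w = recon (i + 1) (t + 1) v := by
  obtain ⟨hwl, hwsf⟩ := hw
  simp only [not_forall] at hbad
  obtain ⟨k, hk⟩ := hbad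
  simp only [SqFree, not_forall, not_not] at hk
  obtain ⟨u, hu, a, b, hab⟩ := hk
  have hulen : 1 ≤ u.length := List.length_pos_iff.mpr hu
  -- rotate to put the square at the front
  have hrot : w.rotate (k + a.length) = u ++ u ++ (b ++ a) := by
    rw [← List.rotate_rotate, ← hab]
    rw [List.rotate_eq_drop_append_take (by simp only [List.length_append]; omega)]
    rw [List.drop_append_of_le_length (by simp only [List.length_append]; omega),
        List.drop_append_of_le_length le_rfl,
        List.take_append_of_le_length (by simp only [List.length_append]; omega),
        List.take_append_of_le_length le_rfl]
    simp
  set r := b ++ a with hr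
  have hn0 : n ≠ 0 := by
    intro h
    subst h
    rw [List.length_eq_zero_iff.mp hwl] at hrot
    simp only [List.rotate_nil] at hrot
    exact hu (List.append_eq_nil_iff.mp (List.append_eq_nil_iff.mp hrot.symm).1).1
  set j := (k + a.length) % n with hj
  have hjn : j < n := Nat.mod_lt _ (by omega)
  have hrotj : w.rotate j = u ++ u ++ r := by
    rw [hj, ← hwl, List.rotate_mod]
    exact hrot
  have hlens : u.length + u.length + r.length = n := by
    have := congrArg List.length hrotj
    simp only [List.length_rotate, List.length_append, hwl] at this; omega
  have hj1 : 1 ≤ j := by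
    rcases Nat.eq_zero_or_pos j with h0 | h
    · exfalso
      rw [h0, List.rotate_zero] at hrotj
      exact hwsf u hu ⟨[], r, by rw [hrotj]; simp⟩
    · exact h
  set t := n - j with ht
  have ht1 : 1 ≤ t := by omega
  have htn : t ≤ n := by omega
  have hwt : w = (u ++ u ++ r).rotate t := by
    rw [← hrotj, List.rotate_rotate]
    have hjt : j + t = n := by omega
    rw [hjt, ← hwl, List.rotate_length]
  -- t ≥ 2|u| is impossible
  have htlt : t < 2 * u.length := by
    by_contra hge
    push_neg at hge
    apply hwsf u hu
    rw [hwt, rot_big hge (by simp only [List.length_append]; omega)]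
    exact ⟨(u ++ u ++ r).drop t, r.take (t - 2 * u.length), by simp [List.append_assoc]⟩
  rcases le_or_gt t u.length with hcase | hcase
  · -- seam inside the first copy of u ; v = u ++ r
    have hwt2 : w = u.drop t ++ (u ++ r) ++ u.take t := by rw [hwt, rot_small hcase]
    refine ⟨u.length - 1, Finset.mem_range.mpr (by omega), t - 1,
      Finset.mem_range.mpr (by omega), u ++ r, ⟨?_, ?_⟩, ?_⟩
    · simp only [List.length_append]; omega
    · exact sqFree_of_infix hwsf ⟨u.drop t, u.take t, hwt2.symm⟩
    · have e1 : u.length - 1 + 1 = u.length := by omega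
      have e2 : t - 1 + 1 = t := by omega
      rw [e1, e2, recon, if_pos hcase]
      rw [List.take_append_of_le_length le_rfl, List.take_length]
      exact hwt2
  · -- seam inside the second copy of u ; v = r ++ u
    have hwt2 : w = u.drop (t - u.length) ++ (r ++ u) ++ u.take (t - u.length) := by
      rw [hwt, rot_mid hcase.le (by omega)]
    refine ⟨u.length - 1, Finset.mem_range.mpr (by omega), t - 1,
      Finset.mem_range.mpr (by omega), r ++ u, ⟨?_, ?_⟩, ?_⟩
    · simp only [List.length_append]; omega
    · exact sqFree_of_infix hwsf ⟨u.drop (t - u.length), u.take (t - u.length), hwt2.symm⟩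
    · have e1 : u.length - 1 + 1 = u.length := by omega
      have e2 : t - 1 + 1 = t := by omega
      rw [e1, e2, recon, if_neg (by omega)]
      have e3 : (r ++ u).length - u.length = r.length := by simp
      rw [e3, List.drop_append_of_le_length le_rfl, List.drop_length]
      simp only [List.nil_append]
      exact hwt2

/-- Counting lemma for extensions. -/
lemma lemA (A : Type*) [Fintype A] (n : ℕ) :
    Fintype.card A * (sqLangN A n).ncard
      ≤ (sqLangN A (n + 1)).ncard
        + ∑ i ∈ Finset.range (n + 1), (sqLangN A (n - i)).ncard := by
  classical
  set U : Set (List A) := {w | w.length = n + 1 ∧ SqFree (w.take n)} with hU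
  have hUfin : U.Finite := (List.finite_length_eq A (n + 1)).subset fun _ h => h.1
  have hinj : Function.Injective fun x : List A × A => x.1 ++ [x.2] := by
    rintro ⟨v, c⟩ ⟨v', c'⟩ h
    simp only at h
    obtain ⟨h1, h2⟩ := List.append_inj' h rfl
    simp only [List.cons.injEq] at h2
    exact Prod.ext h1 h2.1
  have hUeq : U = (fun x : List A × A => x.1 ++ [x.2]) '' ((sqLangN A n) ×ˢ Set.univ) := by
    ext w
    constructor
    · rintro ⟨hl, hsf⟩
      obtain ⟨c, hc⟩ := List.length_eq_one_iff.mp (show (w.drop n).length = 1 by simp [hl])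
      refine ⟨(w.take n, c), ⟨⟨by simp [hl], hsf⟩, Set.mem_univ _⟩, ?_⟩
      simp only [← hc]
      exact w.take_append_drop n
    · rintro ⟨⟨v, c⟩, ⟨⟨hvl, hvsf⟩, -⟩, rfl⟩
      refine ⟨by simp [hvl], ?_⟩
      rw [List.take_append_of_le_length (by omega), List.take_of_length_le (by omega)]
      exact hvsf
  have hUcard : U.ncard = (sqLangN A n).ncard * Fintype.card A := by
    rw [hUeq, Set.ncard_image_of_injective _ hinj, ← Nat.card_coe_set_eq,
      Nat.card_congr (Equiv.Set.prod _ _), Nat.card_prod, Nat.card_coe_set_eq,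
      Nat.card_coe_set_eq, Set.ncard_univ, Nat.card_eq_fintype_card]
  have hsub : sqLangN A (n + 1) ⊆ U := fun w hw =>
    ⟨hw.1, sqFree_of_infix hw.2 (List.take_prefix n w).isInfix⟩
  have hsplit : (U \ sqLangN A (n + 1)).ncard + (sqLangN A (n + 1)).ncard = U.ncard :=
    Set.ncard_diff_add_ncard_of_subset hsub hUfin
  have hdiff : (U \ sqLangN A (n + 1))
      ⊆ ⋃ i ∈ Finset.range (n + 1),
          (fun v : List A => v ++ v.drop (v.length - (i + 1))) '' sqLangN A (n - i) := by
    rintro w ⟨⟨hl, hpre⟩, hnsf⟩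
    have hnsf' : ¬ SqFree w := fun h => hnsf ⟨hl, h⟩
    obtain ⟨i, hi, v, hv, hrec⟩ := extension_structure hl hpre hnsf'
    exact Set.mem_biUnion hi ⟨v, hv, hrec.symm⟩
  have hbound : (U \ sqLangN A (n + 1)).ncard
      ≤ ∑ i ∈ Finset.range (n + 1), (sqLangN A (n - i)).ncard := by
    refine le_trans (Set.ncard_le_ncard hdiff ?_) ?_
    · exact (Finset.range (n + 1)).finite_toSet.biUnion
        fun i _ => (sqLangN_finite A _).image _
    · refine le_trans (ncard_biUnion_le _ _) (Finset.sum_le_sum fun i _ => ?_)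
      exact Set.ncard_image_le (sqLangN_finite A _)
  calc Fintype.card A * (sqLangN A n).ncard = U.ncard := by rw [hUcard, mul_comm]
    _ = (U \ sqLangN A (n + 1)).ncard + (sqLangN A (n + 1)).ncard := hsplit.symm
    _ ≤ (∑ i ∈ Finset.range (n + 1), (sqLangN A (n - i)).ncard)
          + (sqLangN A (n + 1)).ncard := by omega
    _ = _ := by omega

/-- Counting lemma for circular squares. -/
lemma lemB (A : Type*) [Fintype A] (n : ℕ) :
    (sqLangN A n).ncard
      ≤ (csqLangN A n).ncard
        + ∑ i ∈ Finset.range n, (2 * i + 1) * (sqLangN A (n - (i + 1))).ncard := by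
  classical
  have hsplit : (sqLangN A n \ csqLangN A n).ncard + (csqLangN A n).ncard
      = (sqLangN A n).ncard :=
    Set.ncard_diff_add_ncard_of_subset (csq_subset A n) (sqLangN_finite A n)
  have hdiff : sqLangN A n \ csqLangN A n
      ⊆ ⋃ i ∈ Finset.range n, ⋃ t ∈ Finset.range (2 * i + 1),
          recon (i + 1) (t + 1) '' sqLangN A (n - (i + 1)) := by
    rintro w ⟨hw, hnc⟩
    have hbad : ¬ ∀ k : ℕ, SqFree (w.rotate k) := fun h => hnc ⟨hw.1, h⟩
    obtain ⟨i, hi, t, htm, v, hv, hrec⟩ := circ_structure hw hbad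
    exact Set.mem_biUnion hi (Set.mem_biUnion htm ⟨v, hv, hrec.symm⟩)
  have hbound : (sqLangN A n \ csqLangN A n).ncard
      ≤ ∑ i ∈ Finset.range n, (2 * i + 1) * (sqLangN A (n - (i + 1))).ncard := by
    refine le_trans (Set.ncard_le_ncard hdiff ?_) ?_
    · exact (Finset.range n).finite_toSet.biUnion fun i _ =>
        (Finset.range (2 * i + 1)).finite_toSet.biUnion fun t _ =>
          (sqLangN_finite A _).image _
    · refine le_trans (ncard_biUnion_le _ _) (Finset.sum_le_sum fun i _ => ?_)
      refine le_trans (ncard_biUnion_le _ _) ?_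
      refine le_trans (Finset.sum_le_sum fun t _ =>
        Set.ncard_image_le (sqLangN_finite A _)) ?_
      rw [Finset.sum_const, Finset.card_range, smul_eq_mul]
  omega


/-- Evaluation/bound for the series `∑ (2i+1) x^{i+1}` with `x = β⁻¹`. -/
lemma series_bound {β : ℝ} (hβ3 : 3 < β) (n : ℕ) :
    ∑ i ∈ Finset.range n, (2 * (i : ℝ) + 1) * β⁻¹ ^ (i + 1) ≤ (1 + β) / (β - 1) ^ 2 := by
  have hβ0 : (0 : ℝ) < β := by linarith
  have hx0 : (0 : ℝ) < β⁻¹ := inv_pos.mpr hβ0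
  have hx1 : β⁻¹ < 1 := by
    rw [inv_lt_one_iff₀]; right; linarith
  have hnorm : ‖β⁻¹‖ < 1 := by rwa [Real.norm_eq_abs, abs_of_nonneg hx0.le]
  have hsummable1 : Summable fun i : ℕ => (i : ℝ) * β⁻¹ ^ i := by
    have h := summable_pow_mul_geometric_of_norm_lt_one (R := ℝ) 1 hnorm
    simpa using h
  have hsummable2 : Summable fun i : ℕ => β⁻¹ ^ i :=
    summable_geometric_of_lt_one hx0.le hx1
  have hfun : (fun i : ℕ => (2 * (i : ℝ) + 1) * β⁻¹ ^ (i + 1))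
      = fun i : ℕ => (2 * β⁻¹) * ((i : ℝ) * β⁻¹ ^ i) + β⁻¹ * β⁻¹ ^ i := by
    funext i; ring
  have hsummable : Summable fun i : ℕ => (2 * (i : ℝ) + 1) * β⁻¹ ^ (i + 1) := by
    rw [hfun]
    exact (hsummable1.mul_left _).add (hsummable2.mul_left _)
  have hb1 : (0 : ℝ) < β - 1 := by linarith
  have hbne : β - 1 ≠ 0 := ne_of_gt hb1
  have htsum : ∑' i : ℕ, (2 * (i : ℝ) + 1) * β⁻¹ ^ (i + 1) = (1 + β) / (β - 1) ^ 2 := by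
    have h1 : ∑' i : ℕ, (i : ℝ) * β⁻¹ ^ i = β⁻¹ / (1 - β⁻¹) ^ 2 :=
      tsum_coe_mul_geometric_of_norm_lt_one hnorm
    have h2 : ∑' i : ℕ, β⁻¹ ^ i = (1 - β⁻¹)⁻¹ := tsum_geometric_of_lt_one hx0.le hx1
    rw [hfun, Summable.tsum_add (hsummable1.mul_left _) (hsummable2.mul_left _),
      tsum_mul_left, tsum_mul_left, h1, h2]
    have key : (1 : ℝ) - β⁻¹ = (β - 1) / β := by
      rw [eq_div_iff hβ0.ne', sub_mul, inv_mul_cancel₀ hβ0.ne']; ring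
    rw [key, div_pow, inv_div, div_div_eq_mul_div]
    have e2 : β⁻¹ * β ^ 2 = β := by
      rw [sq, ← mul_assoc, inv_mul_cancel₀ hβ0.ne', one_mul]
    rw [e2]
    have hββ : β⁻¹ * β = 1 := inv_mul_cancel₀ hβ0.ne'
    calc 2 * β⁻¹ * (β / (β - 1) ^ 2) + β⁻¹ * (β / (β - 1))
        = (β⁻¹ * β) * (2 / (β - 1) ^ 2) + (β⁻¹ * β) * (1 / (β - 1)) := by ring
      _ = 2 / (β - 1) ^ 2 + 1 / (β - 1) := by rw [hββ]; ring
      _ = (1 + β) / (β - 1) ^ 2 := by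
          rw [div_add_div _ _ (pow_ne_zero 2 hbne) hbne,
            div_eq_div_iff (by positivity) (pow_ne_zero 2 hbne)]
          ring
  calc ∑ i ∈ Finset.range n, (2 * (i : ℝ) + 1) * β⁻¹ ^ (i + 1)
      ≤ ∑' i : ℕ, (2 * (i : ℝ) + 1) * β⁻¹ ^ (i + 1) :=
        Summable.sum_le_tsum _ (fun i _ => by positivity) hsummable
    _ = (1 + β) / (β - 1) ^ 2 := htsum

/-- Geometric bound. -/
lemma geom_bound {β : ℝ} (hβ3 : 3 < β) (n : ℕ) :
    ∑ i ∈ Finset.range n, β⁻¹ ^ i ≤ (1 - β⁻¹)⁻¹ := by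
  have hβ0 : (0 : ℝ) < β := by linarith
  have hx0 : (0 : ℝ) < β⁻¹ := inv_pos.mpr hβ0
  have hx1 : β⁻¹ < 1 := by
    rw [inv_lt_one_iff₀]; right; linarith
  calc ∑ i ∈ Finset.range n, β⁻¹ ^ i
      ≤ ∑' i : ℕ, β⁻¹ ^ i :=
        Summable.sum_le_tsum _ (fun i _ => by positivity)
          (summable_geometric_of_lt_one hx0.le hx1)
    _ = (1 - β⁻¹)⁻¹ := tsum_geometric_of_lt_one hx0.le hx1

variable (A) in
/-- The growth lemma: the number of square-free words grows at least by a factor `β`. -/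
lemma growth [Fintype A] {β : ℝ} (hβ3 : 3 < β)
    (hβid : β ^ 2 = (Fintype.card A : ℝ) * β - (Fintype.card A : ℝ)) :
    ∀ n : ℕ, β * ((sqLangN A n).ncard : ℝ) ≤ ((sqLangN A (n + 1)).ncard : ℝ) := by
  have hβ0 : (0 : ℝ) < β := by linarith
  have hx0 : (0 : ℝ) < β⁻¹ := inv_pos.mpr hβ0
  intro n
  induction n using Nat.strong_induction_on with
  | _ n IH =>
  have hchain : ∀ i, i ≤ n →
      β ^ i * ((sqLangN A (n - i)).ncard : ℝ) ≤ ((sqLangN A n).ncard : ℝ) := by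
    intro i
    induction i with
    | zero => simp
    | succ i ihi =>
      intro hin
      have h1 : β * ((sqLangN A (n - (i + 1))).ncard : ℝ)
          ≤ ((sqLangN A (n - i)).ncard : ℝ) := by
        have h := IH (n - (i + 1)) (by omega)
        have e : n - (i + 1) + 1 = n - i := by omega
        rwa [e] at h
      calc β ^ (i + 1) * ((sqLangN A (n - (i + 1))).ncard : ℝ)
          = β ^ i * (β * ((sqLangN A (n - (i + 1))).ncard : ℝ)) := by ring
        _ ≤ β ^ i * ((sqLangN A (n - i)).ncard : ℝ) :=
            mul_le_mul_of_nonneg_left h1 (by positivity)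
        _ ≤ ((sqLangN A n).ncard : ℝ) := ihi (by omega)
  have hterm : ∀ i, i ≤ n → ((sqLangN A (n - i)).ncard : ℝ)
      ≤ ((sqLangN A n).ncard : ℝ) * β⁻¹ ^ i := by
    intro i hin
    have h := hchain i hin
    have hβi : (0 : ℝ) < β ^ i := by positivity
    calc ((sqLangN A (n - i)).ncard : ℝ)
        = (β ^ i * ((sqLangN A (n - i)).ncard : ℝ)) * β⁻¹ ^ i := by
          rw [inv_pow, mul_comm (β ^ i), mul_assoc,
            mul_inv_cancel₀ (by positivity : (β : ℝ) ^ i ≠ 0), mul_one]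
      _ ≤ ((sqLangN A n).ncard : ℝ) * β⁻¹ ^ i :=
          mul_le_mul_of_nonneg_right h (by positivity)
  have hsum : ∑ i ∈ Finset.range (n + 1), ((sqLangN A (n - i)).ncard : ℝ)
      ≤ ((sqLangN A n).ncard : ℝ) * (1 - β⁻¹)⁻¹ := by
    calc ∑ i ∈ Finset.range (n + 1), ((sqLangN A (n - i)).ncard : ℝ)
        ≤ ∑ i ∈ Finset.range (n + 1), ((sqLangN A n).ncard : ℝ) * β⁻¹ ^ i :=
          Finset.sum_le_sum fun i hi => hterm i (by
            simpa [Nat.lt_succ_iff] using hi)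
      _ = ((sqLangN A n).ncard : ℝ) * ∑ i ∈ Finset.range (n + 1), β⁻¹ ^ i := by
          rw [Finset.mul_sum]
      _ ≤ ((sqLangN A n).ncard : ℝ) * (1 - β⁻¹)⁻¹ :=
          mul_le_mul_of_nonneg_left (geom_bound hβ3 _) (Nat.cast_nonneg _)
  have hcast : (Fintype.card A : ℝ) * ((sqLangN A n).ncard : ℝ)
      ≤ ((sqLangN A (n + 1)).ncard : ℝ)
        + ∑ i ∈ Finset.range (n + 1), ((sqLangN A (n - i)).ncard : ℝ) := by
    exact_mod_cast Stmt13Aux.lemA A n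
  have hb1 : (0 : ℝ) < β - 1 := by linarith
  have hx_eq : (1 - β⁻¹)⁻¹ = β / (β - 1) := by
    have key : (1 : ℝ) - β⁻¹ = (β - 1) / β := by
      rw [eq_div_iff hβ0.ne', sub_mul, inv_mul_cancel₀ hβ0.ne']; ring
    rw [key, inv_div]
  have hkey : (Fintype.card A : ℝ) * ((sqLangN A n).ncard : ℝ)
      ≤ ((sqLangN A (n + 1)).ncard : ℝ)
        + ((sqLangN A n).ncard : ℝ) * (β / (β - 1)) := by
    rw [← hx_eq]; linarith
  have h2 := mul_le_mul_of_nonneg_left hkey hb1.le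
  have h3 : (β - 1) * (((sqLangN A n).ncard : ℝ) * (β / (β - 1)))
      = β * ((sqLangN A n).ncard : ℝ) := by
    rw [mul_comm (β - 1), mul_assoc, div_mul_cancel₀ _ (ne_of_gt hb1)]
    ring
  have hsn : (0 : ℝ) ≤ ((sqLangN A n).ncard : ℝ) := Nat.cast_nonneg _
  nlinarith [h2, h3, hβid, hsn, hb1]

end Stmt13Aux

/-- For an alphabet with `|𝒜| ≥ 5`, `β = (|𝒜| + √(|𝒜|² − 4|𝒜|))/2` and
`C = 1 − (1+β)/(β−1)²`, one has `C > 0` and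
`|L̊_n(𝒜,2)| ≥ C·|ℒ_n(𝒜,2)|` for all `n ≥ 0`. -/
theorem stmt13 {A : Type*} [Fintype A] (hA : 5 ≤ Fintype.card A) (β C : ℝ)
    (hβ : β = ((Fintype.card A : ℝ) +
      Real.sqrt ((Fintype.card A : ℝ) ^ 2 - 4 * (Fintype.card A : ℝ))) / 2)
    (hC : C = 1 - (1 + β) / (β - 1) ^ 2) :
    0 < C ∧ ∀ n : ℕ, C * ((sqLangN A n).ncard : ℝ) ≤ ((csqLangN A n).ncard : ℝ) := by
  have hk5 : (5 : ℝ) ≤ (Fintype.card A : ℝ) := by exact_mod_cast hA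
  have hdisc : (5 : ℝ) ≤ (Fintype.card A : ℝ) ^ 2 - 4 * (Fintype.card A : ℝ) := by nlinarith
  have hsqnn : 0 ≤ Real.sqrt ((Fintype.card A : ℝ) ^ 2 - 4 * (Fintype.card A : ℝ)) :=
    Real.sqrt_nonneg _
  have hsq : (Real.sqrt ((Fintype.card A : ℝ) ^ 2 - 4 * (Fintype.card A : ℝ))) ^ 2
      = (Fintype.card A : ℝ) ^ 2 - 4 * (Fintype.card A : ℝ) := Real.sq_sqrt (by linarith)
  have hsqrt2 : 2 < Real.sqrt ((Fintype.card A : ℝ) ^ 2 - 4 * (Fintype.card A : ℝ)) := by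
    nlinarith [hsq, hsqnn]
  have hβ3 : 3 < β := by rw [hβ]; nlinarith
  have hβid : β ^ 2 = (Fintype.card A : ℝ) * β - (Fintype.card A : ℝ) := by
    have h2β : 2 * β - (Fintype.card A : ℝ)
        = Real.sqrt ((Fintype.card A : ℝ) ^ 2 - 4 * (Fintype.card A : ℝ)) := by
      rw [hβ]; ring
    nlinarith [hsq, h2β]
  have hCpos : 0 < C := by
    have h1 : (0 : ℝ) < (β - 1) ^ 2 := by nlinarith
    rw [hC, sub_pos, div_lt_one h1]; nlinarith
  have hβ0 : (0 : ℝ) < β := by linarith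
  have hx0 : (0 : ℝ) < β⁻¹ := inv_pos.mpr hβ0
  have hgrow := Stmt13Aux.growth A hβ3 hβid
  -- iterated growth
  have hchainAll : ∀ n i : ℕ, i ≤ n → ((sqLangN A (n - i)).ncard : ℝ)
      ≤ ((sqLangN A n).ncard : ℝ) * β⁻¹ ^ i := by
    intro n i
    induction i with
    | zero => simp
    | succ i ihi =>
      intro hin
      have h1 : β * ((sqLangN A (n - (i + 1))).ncard : ℝ)
          ≤ ((sqLangN A (n - i)).ncard : ℝ) := by
        have h := hgrow (n - (i + 1))
        have e : n - (i + 1) + 1 = n - i := by omega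
        rwa [e] at h
      have h2 := ihi (by omega)
      calc ((sqLangN A (n - (i + 1))).ncard : ℝ)
          = (β * ((sqLangN A (n - (i + 1))).ncard : ℝ)) * β⁻¹ := by
            rw [mul_comm β, mul_assoc, mul_inv_cancel₀ hβ0.ne', mul_one]
        _ ≤ ((sqLangN A (n - i)).ncard : ℝ) * β⁻¹ :=
            mul_le_mul_of_nonneg_right h1 hx0.le
        _ ≤ (((sqLangN A n).ncard : ℝ) * β⁻¹ ^ i) * β⁻¹ :=
            mul_le_mul_of_nonneg_right h2 hx0.le
        _ = ((sqLangN A n).ncard : ℝ) * β⁻¹ ^ (i + 1) := by ring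
  refine ⟨hCpos, fun n => ?_⟩
  have hBcast : ((sqLangN A n).ncard : ℝ)
      ≤ ((csqLangN A n).ncard : ℝ)
        + ∑ i ∈ Finset.range n, (2 * (i : ℝ) + 1) * ((sqLangN A (n - (i + 1))).ncard : ℝ) := by
    have h := Stmt13Aux.lemB A n
    exact_mod_cast h
  have hsn : (0 : ℝ) ≤ ((sqLangN A n).ncard : ℝ) := Nat.cast_nonneg _
  have hsum2 : ∑ i ∈ Finset.range n, (2 * (i : ℝ) + 1) * ((sqLangN A (n - (i + 1))).ncard : ℝ)
      ≤ ((sqLangN A n).ncard : ℝ) * ((1 + β) / (β - 1) ^ 2) := by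
    calc ∑ i ∈ Finset.range n, (2 * (i : ℝ) + 1) * ((sqLangN A (n - (i + 1))).ncard : ℝ)
        ≤ ∑ i ∈ Finset.range n,
            (2 * (i : ℝ) + 1) * (((sqLangN A n).ncard : ℝ) * β⁻¹ ^ (i + 1)) := by
          refine Finset.sum_le_sum fun i hi => ?_
          refine mul_le_mul_of_nonneg_left ?_ (by positivity)
          exact hchainAll n (i + 1) (Finset.mem_range.mp hi)
      _ = ((sqLangN A n).ncard : ℝ)
            * ∑ i ∈ Finset.range n, (2 * (i : ℝ) + 1) * β⁻¹ ^ (i + 1) := by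
          rw [Finset.mul_sum]
          refine Finset.sum_congr rfl fun i _ => by ring
      _ ≤ ((sqLangN A n).ncard : ℝ) * ((1 + β) / (β - 1) ^ 2) :=
          mul_le_mul_of_nonneg_left (Stmt13Aux.series_bound hβ3 n) hsn
  rw [hC]
  nlinarith [hBcast, hsum2]
end

section
/- Let 𝒜 be a finite alphabet and ℱ ⊆ 𝒜⁺ a set of forbidden factors. Suppose there exists a real β > 1 such that |ℒ_{n+1}(𝒜,ℱ)| ≥ β·|ℒ_n(𝒜,ℱ)| for all n ≥ 0, and such that C := 1 − Σ_{f∈ℱ} (|f|−1)·β^{−|f|} > 0. Then for all n ≥ 0, |ℒ_n(𝒜,ℱ)| ≥ |L̊_n(𝒜,ℱ)| ≥ C·|ℒ_n(𝒜,ℱ)|. -/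
open Filter

/-- The set of words of length `n` over `A` avoiding every factor in `F`. -/
def langN {A : Type*} (F : Set (List A)) (n : ℕ) : Set (List A) :=
  {w | w.length = n ∧ ∀ f ∈ F, ¬ f <:+: w}

/-- The set of circularly `F`-free words of length `n` over `A`:
every rotation (conjugate) of the word avoids all factors in `F`. -/
def clangN {A : Type*} (F : Set (List A)) (n : ℕ) : Set (List A) :=
  {w | w.length = n ∧ ∀ k : ℕ, ∀ f ∈ F, ¬ f <:+: w.rotate k}

section Aux

variable {A : Type*}

/-- An infix of `u ++ v` is an infix of `u`, an infix of `v`, or a straddling word. -/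
lemma my_infix_append_cases {f u v : List A} (h : f <:+: u ++ v) :
    f <:+: u ∨ f <:+: v ∨
      ∃ s p : List A, f = s ++ p ∧ s ≠ [] ∧ p ≠ [] ∧ s <:+ u ∧ p <+: v := by
  obtain ⟨x, y, hxy⟩ := h
  have hxy' : x ++ (f ++ y) = u ++ v := by simpa [List.append_assoc] using hxy
  by_cases h1 : x.length + f.length ≤ u.length
  · left
    have hp : x ++ f <+: u ++ v := ⟨y, by simpa [List.append_assoc] using hxy⟩
    have hxf : x ++ f <+: u :=
      List.prefix_of_prefix_length_le hp (List.prefix_append u v) (by simpa using h1)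
    exact ((List.suffix_append x f).isInfix).trans hxf.isInfix
  · by_cases h2 : u.length ≤ x.length
    · right; left
      have hE := congrArg (List.drop x.length) hxy'
      rw [List.drop_left, List.drop_append,
        List.drop_eq_nil_of_le h2, List.nil_append] at hE
      exact ((List.prefix_append f y).isInfix).trans
        (hE ▸ (List.drop_suffix _ _).isInfix)
    · right; right
      push_neg at h1 h2
      have hE := congrArg (List.drop x.length) hxy'
      rw [List.drop_left, List.drop_append,
        show x.length - u.length = 0 by omega, List.drop_zero] at hE
      -- hE : f ++ y = u.drop x.length ++ v
      set s := u.drop x.length with hs_def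
      have hslen : s.length = u.length - x.length := by simp [hs_def]
      have hsf : s <+: f :=
        List.prefix_of_prefix_length_le ⟨v, hE.symm⟩ (List.prefix_append f y) (by omega)
      obtain ⟨p, hsp⟩ := hsf
      have hv : p ++ y = v := by
        apply List.append_cancel_left (as := s)
        rw [← List.append_assoc, hsp, hE]
      refine ⟨s, p, hsp.symm, ?_, ?_, List.drop_suffix _ _, ⟨y, hv⟩⟩
      · intro hnil
        have := congrArg List.length hnil
        simp [hslen] at this
        omega
      · intro hnil
        have hlf := congrArg List.length hsp
        rw [hnil] at hlf
        simp at hlf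
        omega

lemma infix_langN {F : Set (List A)} {n : ℕ} {w u : List A}
    (hw : w ∈ langN F n) (hu : u <:+: w) : u ∈ langN F u.length :=
  ⟨rfl, fun f hf hfu => hw.2 f hf (hfu.trans hu)⟩

lemma clang_subset_lang (F : Set (List A)) (n : ℕ) : clangN F n ⊆ langN F n := by
  intro w hw
  exact ⟨hw.1, fun f hf hinf => hw.2 0 f hf (by simpa [List.rotate_zero] using hinf)⟩

lemma langN_finite [Finite A] (F : Set (List A)) (n : ℕ) : (langN F n).Finite :=
  (List.finite_length_le A n).subset (fun w hw => le_of_eq hw.1)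

/-- Straddling set: words of `langN F n` having `f.take j` as suffix and `f.drop j`
as prefix. -/
def straddleSet (F : Set (List A)) (n : ℕ) (f : List A) (j : ℕ) : Set (List A) :=
  {w | w ∈ langN F n ∧ f.take j <:+ w ∧ f.drop j <+: w}

lemma straddle_key {F : Set (List A)} {n : ℕ} {f : List A} {j : ℕ}
    (hfn : f.length ≤ n) (hj1 : 0 < j) (hj2 : j < f.length)
    {w : List A} (hw : w ∈ straddleSet F n f j) :
    w = f.drop j ++ ((w.drop (f.length - j)).take (n - f.length)) ++ f.take j := by
  obtain ⟨⟨hlen, -⟩, hs, hp⟩ := hw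
  have hplen : (f.drop j).length = f.length - j := by simp
  have hslen : (f.take j).length = j := by simp; omega
  have hp' : w.take (f.length - j) = f.drop j := by
    have := List.prefix_iff_eq_take.mp hp
    rw [hplen] at this
    exact this.symm
  have hs' : w.drop (n - j) = f.take j := by
    have := List.suffix_iff_eq_drop.mp hs
    rw [hslen, hlen] at this
    exact this.symm
  calc w = w.take (f.length - j) ++ w.drop (f.length - j) :=
        (List.take_append_drop _ _).symm
    _ = w.take (f.length - j) ++ ((w.drop (f.length - j)).take (n - f.length)
          ++ (w.drop (f.length - j)).drop (n - f.length)) := by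
        rw [List.take_append_drop (n - f.length)]
    _ = f.drop j ++ ((w.drop (f.length - j)).take (n - f.length) ++ f.take j) := by
        rw [hp', List.drop_drop, show (f.length - j) + (n - f.length) = n - j by omega, hs']
    _ = f.drop j ++ ((w.drop (f.length - j)).take (n - f.length)) ++ f.take j := by
        rw [List.append_assoc]

lemma straddle_card [Finite A] {F : Set (List A)} {n : ℕ} {f : List A} {j : ℕ}
    (hfn : f.length ≤ n) (hj1 : 0 < j) (hj2 : j < f.length) :
    (straddleSet F n f j).ncard ≤ (langN F (n - f.length)).ncard := by
  refine Set.ncard_le_ncard_of_injOn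
    (fun w => (w.drop (f.length - j)).take (n - f.length)) ?_ ?_ (langN_finite F _)
  · intro w hw
    obtain ⟨hwl, hs, hp⟩ := hw
    have hlen : w.length = n := hwl.1
    have hinf : (w.drop (f.length - j)).take (n - f.length) <:+: w :=
      (List.take_prefix _ _).isInfix.trans (List.drop_suffix _ _).isInfix
    have hmem := infix_langN hwl hinf
    have hL : ((w.drop (f.length - j)).take (n - f.length)).length = n - f.length := by
      simp only [List.length_take, List.length_drop, hlen]
      omega
    rwa [hL] at hmem
  · intro w1 h1 w2 h2 heq
    dsimp only at heq
    rw [straddle_key hfn hj1 hj2 h1, straddle_key hfn hj1 hj2 h2, heq]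

lemma my_ncard_biUnion_le {ι α : Type*} (s : Finset ι) (t : ι → Set α) :
    (⋃ i ∈ s, t i).ncard ≤ ∑ i ∈ s, (t i).ncard := by
  classical
  induction s using Finset.induction with
  | empty => simp
  | @insert a s ha ih =>
    rw [Finset.sum_insert ha, Finset.set_biUnion_insert]
    exact le_trans (Set.ncard_union_le _ _) (Nat.add_le_add_left ih _)

end Aux

/-- Suppose `β > 1` satisfies `|ℒ_{n+1}(𝒜,ℱ)| ≥ β·|ℒ_n(𝒜,ℱ)|` for all `n`, and
`C := 1 − Σ_{f∈ℱ} (|f|−1)·β^(−|f|) > 0`. Then for all `n ≥ 0`,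
`|ℒ_n(𝒜,ℱ)| ≥ |L̊_n(𝒜,ℱ)| ≥ C·|ℒ_n(𝒜,ℱ)|`. -/
theorem stmt14 {A : Type*} [Fintype A] (F : Set (List A))
    (hF : ∀ f ∈ F, f ≠ ([] : List A)) (β : ℝ) (hβ : 1 < β)
    (hgrow : ∀ n : ℕ, β * ((langN F n).ncard : ℝ) ≤ ((langN F (n + 1)).ncard : ℝ))
    (hsum : Summable fun f : F =>
      (((f : List A).length : ℝ) - 1) * β ^ (-((f : List A).length : ℤ)))
    (C : ℝ)
    (hC : C = 1 - ∑' f : F, (((f : List A).length : ℝ) - 1) * β ^ (-((f : List A).length : ℤ)))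
    (hCpos : 0 < C) :
    ∀ n : ℕ,
      ((clangN F n).ncard : ℝ) ≤ ((langN F n).ncard : ℝ) ∧
      C * ((langN F n).ncard : ℝ) ≤ ((clangN F n).ncard : ℝ) := by
  classical
  have hβ0 : (0:ℝ) < β := lt_trans one_pos hβ
  -- growth iterated
  have grow_pow : ∀ m k : ℕ, β ^ k * ((langN F m).ncard : ℝ) ≤ ((langN F (m + k)).ncard : ℝ) := by
    intro m k
    induction k with
    | zero => simp
    | succ k ih =>
      have h1 : β ^ (k+1) * ((langN F m).ncard : ℝ) = β * (β ^ k * ((langN F m).ncard : ℝ)) := by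
        ring
      rw [h1]
      calc β * (β ^ k * ((langN F m).ncard : ℝ))
          ≤ β * ((langN F (m + k)).ncard : ℝ) := by
            exact mul_le_mul_of_nonneg_left ih (le_of_lt hβ0)
        _ ≤ ((langN F (m + k + 1)).ncard : ℝ) := hgrow (m + k)
  intro n
  have hfinL := langN_finite F n
  have hsub := clang_subset_lang F n
  have hfinC := hfinL.subset hsub
  have part1 : ((clangN F n).ncard : ℝ) ≤ ((langN F n).ncard : ℝ) := by
    exact_mod_cast Set.ncard_le_ncard hsub hfinL
  refine ⟨part1, ?_⟩
  -- the finite set of relevant forbidden factors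
  have hF'fin : (F ∩ {l : List A | l.length ≤ n}).Finite :=
    (List.finite_length_le A n).subset Set.inter_subset_right
  set F' : Finset (List A) := hF'fin.toFinset with hF'def
  have hF'mem : ∀ f, f ∈ F' ↔ f ∈ F ∧ f.length ≤ n := by
    intro f
    rw [hF'def, Set.Finite.mem_toFinset]
    exact Set.mem_inter_iff _ _ _
  -- the bad set
  set B : Set (List A) := langN F n \ clangN F n with hBdef
  have hBsub : B ⊆ ⋃ f ∈ F', ⋃ j ∈ Finset.Ioo 0 f.length, straddleSet F n f j := by
    rintro w ⟨hw, hnc⟩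
    have hlen : w.length = n := hw.1
    have hx : ∃ k, ∃ f ∈ F, f <:+: w.rotate k := by
      by_contra hcon
      push_neg at hcon
      exact hnc ⟨hlen, fun k f hf => hcon k f hf⟩
    obtain ⟨k, f, hfF, hinf⟩ := hx
    have hfn : f.length ≤ n := by
      have := hinf.length_le
      rwa [List.length_rotate, hlen] at this
    rw [List.rotate_eq_drop_append_take_mod] at hinf
    rcases my_infix_append_cases hinf with h | h | ⟨s, p, hf_eq, hs_ne, hp_ne, hs, hp⟩
    · exact (hw.2 f hfF (h.trans (List.drop_suffix _ _).isInfix)).elim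
    · exact (hw.2 f hfF (h.trans (List.take_prefix _ _).isInfix)).elim
    · have hflen : f.length = s.length + p.length := by rw [hf_eq]; simp
      have hs0 : 0 < s.length := List.length_pos_iff.mpr hs_ne
      have hp0 : 0 < p.length := List.length_pos_iff.mpr hp_ne
      have htake : f.take s.length = s := by rw [hf_eq]; exact List.take_left
      have hdrop : f.drop s.length = p := by rw [hf_eq]; exact List.drop_left
      refine Set.mem_biUnion ((hF'mem f).mpr ⟨hfF, hfn⟩) ?_
      refine Set.mem_biUnion (Finset.mem_Ioo.mpr ⟨hs0, by omega⟩) ?_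
      refine ⟨hw, ?_, ?_⟩
      · rw [htake]; exact hs.trans (List.drop_suffix _ _)
      · rw [hdrop]; exact hp.trans (List.take_prefix _ _)
  -- counting bound in ℕ
  have hcount : B.ncard ≤
      ∑ f ∈ F', (f.length - 1) * (langN F (n - f.length)).ncard := by
    have hfinU : (⋃ f ∈ F', ⋃ j ∈ Finset.Ioo 0 f.length, straddleSet F n f j).Finite := by
      apply hfinL.subset
      intro w hw
      simp only [Set.mem_iUnion] at hw
      obtain ⟨f, -, j, -, hmem, -, -⟩ := hw
      exact hmem
    calc B.ncard ≤ (⋃ f ∈ F', ⋃ j ∈ Finset.Ioo 0 f.length, straddleSet F n f j).ncard :=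
          Set.ncard_le_ncard hBsub hfinU
      _ ≤ ∑ f ∈ F', (⋃ j ∈ Finset.Ioo 0 f.length, straddleSet F n f j).ncard :=
          my_ncard_biUnion_le _ _
      _ ≤ ∑ f ∈ F', (f.length - 1) * (langN F (n - f.length)).ncard := by
          apply Finset.sum_le_sum
          intro f hf
          obtain ⟨hfF, hfn⟩ := (hF'mem f).mp hf
          calc (⋃ j ∈ Finset.Ioo 0 f.length, straddleSet F n f j).ncard
              ≤ ∑ j ∈ Finset.Ioo 0 f.length, (straddleSet F n f j).ncard :=
                my_ncard_biUnion_le _ _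
            _ ≤ ∑ _j ∈ Finset.Ioo 0 f.length, (langN F (n - f.length)).ncard := by
                apply Finset.sum_le_sum
                intro j hj
                obtain ⟨hj1, hj2⟩ := Finset.mem_Ioo.mp hj
                exact straddle_card hfn hj1 hj2
            _ = (f.length - 1) * (langN F (n - f.length)).ncard := by
                rw [Finset.sum_const, Nat.card_Ioo, smul_eq_mul]
                simp
  -- move to ℝ
  have hL4 : ∀ f ∈ F', ((langN F (n - f.length)).ncard : ℝ) ≤
      β ^ (-(f.length : ℤ)) * ((langN F n).ncard : ℝ) := by
    intro f hf
    obtain ⟨hfF, hfn⟩ := (hF'mem f).mp hf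
    have h1 := grow_pow (n - f.length) f.length
    rw [show n - f.length + f.length = n by omega] at h1
    have hpow : (0:ℝ) < β ^ f.length := pow_pos hβ0 _
    rw [zpow_neg, zpow_natCast, inv_mul_eq_div, le_div_iff₀ hpow]
    linarith [h1]
  have hterm_nonneg : ∀ f : F, (0:ℝ) ≤
      (((f : List A).length : ℝ) - 1) * β ^ (-((f : List A).length : ℤ)) := by
    intro f
    have h1 : f.1 ≠ [] := hF f.1 f.2
    have h2 : 1 ≤ f.1.length := List.length_pos_iff.mpr h1
    have : (1:ℝ) ≤ (f.1.length : ℝ) := by exact_mod_cast h2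
    have hz : (0:ℝ) < β ^ (-((f.1.length : ℕ) : ℤ)) := zpow_pos hβ0 _
    nlinarith
  have hF_len : ∀ f ∈ F', 1 ≤ f.length := by
    intro f hf
    exact List.length_pos_iff.mpr (hF f ((hF'mem f).mp hf).1)
  have hsum_le : ∑ f ∈ F', (((f.length : ℝ) - 1) * β ^ (-(f.length : ℤ)))
      ≤ ∑' f : F, (((f : List A).length : ℝ) - 1) * β ^ (-((f : List A).length : ℤ)) := by
    have hsub' : ∀ f ∈ F', f ∈ F := fun f hf => ((hF'mem f).mp hf).1
    calc ∑ f ∈ F', (((f.length : ℝ) - 1) * β ^ (-(f.length : ℤ)))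
        = ∑ f ∈ F'.filter (· ∈ F), (((f.length : ℝ) - 1) * β ^ (-(f.length : ℤ))) := by
          rw [Finset.filter_true_of_mem hsub']
      _ = ∑ x ∈ F'.subtype (· ∈ F), (((x : List A).length : ℝ) - 1)
            * β ^ (-((x : List A).length : ℤ)) :=
          (Finset.sum_subtype_eq_sum_filter _).symm
      _ ≤ ∑' f : F, (((f : List A).length : ℝ) - 1) * β ^ (-((f : List A).length : ℤ)) :=
          Summable.sum_le_tsum _ (fun i _ => hterm_nonneg i) hsum
  have hLn_nonneg : (0:ℝ) ≤ ((langN F n).ncard : ℝ) := Nat.cast_nonneg _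
  have hBreal : (B.ncard : ℝ) ≤ (1 - C) * ((langN F n).ncard : ℝ) := by
    calc (B.ncard : ℝ)
        ≤ ((∑ f ∈ F', (f.length - 1) * (langN F (n - f.length)).ncard : ℕ) : ℝ) := by
          exact_mod_cast hcount
      _ = ∑ f ∈ F', ((f.length : ℝ) - 1) * ((langN F (n - f.length)).ncard : ℝ) := by
          rw [Nat.cast_sum]
          apply Finset.sum_congr rfl
          intro f hf
          rw [Nat.cast_mul, Nat.cast_sub (hF_len f hf)]
          norm_num
      _ ≤ ∑ f ∈ F', ((f.length : ℝ) - 1) * (β ^ (-(f.length : ℤ)) * ((langN F n).ncard : ℝ)) := by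
          apply Finset.sum_le_sum
          intro f hf
          apply mul_le_mul_of_nonneg_left (hL4 f hf)
          have := hF_len f hf
          have : (1:ℝ) ≤ (f.length : ℝ) := by exact_mod_cast this
          linarith
      _ = (∑ f ∈ F', ((f.length : ℝ) - 1) * β ^ (-(f.length : ℤ))) * ((langN F n).ncard : ℝ) := by
          rw [Finset.sum_mul]
          apply Finset.sum_congr rfl
          intro f _
          ring
      _ ≤ (1 - C) * ((langN F n).ncard : ℝ) := by
          apply mul_le_mul_of_nonneg_right _ hLn_nonneg
          rw [hC]
          simpa using hsum_le
  have hdiff : B.ncard + (clangN F n).ncard = (langN F n).ncard :=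
    Set.ncard_diff_add_ncard_of_subset hsub hfinL
  have hdiffR : (B.ncard : ℝ) + ((clangN F n).ncard : ℝ) = ((langN F n).ncard : ℝ) := by
    exact_mod_cast hdiff
  linarith
end
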